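/- arXiv:2401.06725 — 9 statements merged into one kernel-verified Lean document; each statement's English description precedes it below -/
import Mathlib

section
/- Let W = diag(1, w₂, w₃) be a real diagonal 3×3 matrix with 1 ≥ w₂ ≥ w₃ ≥ 0 and w₃ < 1. Let Π be the orthogonal projection of ℝ³ onto the span of the standard basis vectors e_i with w_i = 1, and let λ be the largest entry of W that is strictly less than 1. Let 0 ≤ ε ≤ 1, let K ≥ 1, and let v̂, x̂₁, …, x̂_K be unit vectors in ℝ³ with Πv̂ ≠ 0; write sgn(v̂) = Πv̂ / ‖Πv̂‖. If (1/2)·∑_{i=1}^{K} ‖W v̂ − W x̂_i‖ ≥ K(1 − ε), then ‖W v̂ − sgn(v̂)‖ ≤ 2√ε · √((1 + λ²)/(1 − λ²)). -/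
open Matrix

/-- The Euclidean norm on `Fin 3 → ℝ`. -/
noncomputable def norm3 (v : Fin 3 → ℝ) : ℝ := Real.sqrt (∑ i, v i ^ 2)

lemma norm3_eq_norm (v : Fin 3 → ℝ) :
    norm3 v = ‖(WithLp.equiv 2 (Fin 3 → ℝ)).symm v‖ := by
  rw [EuclideanSpace.norm_eq]
  simp [norm3, Real.norm_eq_abs, sq_abs]

lemma norm3_sub_le (u w : Fin 3 → ℝ) : norm3 (u - w) ≤ norm3 u + norm3 w := by
  simp only [norm3_eq_norm]
  rw [show (WithLp.equiv 2 (Fin 3 → ℝ)).symm (u - w)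
      = (WithLp.equiv 2 (Fin 3 → ℝ)).symm u - (WithLp.equiv 2 (Fin 3 → ℝ)).symm w from rfl]
  exact norm_sub_le _ _

lemma norm3_pos {y : Fin 3 → ℝ} (hy : y ≠ 0) : 0 < norm3 y := by
  rw [norm3_eq_norm, norm_pos_iff]
  intro h
  exact hy (by simpa using congrArg (WithLp.equiv 2 (Fin 3 → ℝ)) h)

lemma norm3_vec (b0 b1 b2 : ℝ) :
    norm3 ![b0, b1, b2] = Real.sqrt (b0 ^ 2 + b1 ^ 2 + b2 ^ 2) := by
  unfold norm3; rw [Fin.sum_univ_three]; norm_num; rfl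

lemma norm3_one {y : Fin 3 → ℝ} (h : norm3 y = 1) : y 0 ^ 2 + y 1 ^ 2 + y 2 ^ 2 = 1 := by
  unfold norm3 at h
  rw [Fin.sum_univ_three, Real.sqrt_eq_one] at h
  exact h

lemma core (a Q lam ε : ℝ) (ha0 : 0 < a) (ha1 : a ≤ 1) (hQ0 : 0 ≤ Q)
    (hQ : Q ≤ lam ^ 2 * (1 - a ^ 2)) (hlam0 : 0 ≤ lam) (hlam1 : lam < 1)
    (hε0 : 0 ≤ ε) (hn : 1 - 2 * ε ≤ Real.sqrt (a ^ 2 + Q)) :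
    (a - 1) ^ 2 + Q ≤ 4 * ε * ((1 + lam ^ 2) / (1 - lam ^ 2)) := by
  have h1 : (0 : ℝ) < 1 - lam ^ 2 := by nlinarith
  have h3 : (a - 1) ^ 2 + Q ≤ (1 - a ^ 2) * (1 + lam ^ 2) := by
    nlinarith [mul_nonneg (sub_nonneg.2 ha1) ha0.le]
  have key : ((a - 1) ^ 2 + Q) * (1 - lam ^ 2) ≤ 4 * ε * (1 + lam ^ 2) := by
    rcases le_or_gt ε (1 / 2) with hε | hε
    · have hs : (1 - 2 * ε) ^ 2 ≤ a ^ 2 + Q := by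
        have h2 : (0:ℝ) ≤ a ^ 2 + Q := by positivity
        nlinarith [Real.sq_sqrt h2, Real.sqrt_nonneg (a ^ 2 + Q)]
      have h2 : (1 - a ^ 2) * (1 - lam ^ 2) ≤ 4 * ε := by nlinarith
      nlinarith [mul_le_mul_of_nonneg_right h3 h1.le,
        mul_le_mul_of_nonneg_right h2 (by positivity : (0:ℝ) ≤ 1 + lam ^ 2)]
    · nlinarith [mul_le_mul_of_nonneg_right h3 h1.le, sq_nonneg a, sq_nonneg (lam ^ 2),
        sq_nonneg (a * lam), sq_nonneg (a * lam ^ 2)]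
  calc (a - 1) ^ 2 + Q = (((a - 1) ^ 2 + Q) * (1 - lam ^ 2)) / (1 - lam ^ 2) := by
        field_simp
    _ ≤ (4 * ε * (1 + lam ^ 2)) / (1 - lam ^ 2) := by gcongr
    _ = 4 * ε * ((1 + lam ^ 2) / (1 - lam ^ 2)) := by ring

lemma caseA_S (a v0 v1 v2 w₂ w₃ : ℝ) (hane : a ≠ 0) (ha2 : a ^ 2 = v0 ^ 2) :
    (v0 - v0 / a) ^ 2 + (w₂ * v1) ^ 2 + (w₃ * v2) ^ 2
      = (a - 1) ^ 2 + (w₂ ^ 2 * v1 ^ 2 + w₃ ^ 2 * v2 ^ 2) := by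
  field_simp
  ring_nf
  linear_combination (-(a-1)^2) * ha2

lemma caseB_S (a v0 v1 v2 w₃ : ℝ) (hane : a ≠ 0) (ha2 : a ^ 2 = v0 ^ 2 + v1 ^ 2) :
    (v0 - v0 / a) ^ 2 + (v1 - v1 / a) ^ 2 + (w₃ * v2) ^ 2
      = (a - 1) ^ 2 + w₃ ^ 2 * v2 ^ 2 := by
  field_simp
  ring_nf
  linear_combination (-(a-1)^2) * ha2

lemma QleA (w₂ w₃ a v0 v1 v2 : ℝ) (hw₃ : 0 ≤ w₃) (hw₃₂ : w₃ ≤ w₂)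
    (hvs : v0 ^ 2 + v1 ^ 2 + v2 ^ 2 = 1) (ha2 : a ^ 2 = v0 ^ 2) :
    w₂ ^ 2 * v1 ^ 2 + w₃ ^ 2 * v2 ^ 2 ≤ w₂ ^ 2 * (1 - a ^ 2) := by
  nlinarith [mul_le_mul_of_nonneg_right (pow_le_pow_left₀ hw₃ hw₃₂ 2) (sq_nonneg v2),
    sq_nonneg (w₂ * v2)]

lemma QleB (w₃ a v0 v1 v2 : ℝ) (hvs : v0 ^ 2 + v1 ^ 2 + v2 ^ 2 = 1)
    (ha2 : a ^ 2 = v0 ^ 2 + v1 ^ 2) :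
    w₃ ^ 2 * v2 ^ 2 ≤ w₃ ^ 2 * (1 - a ^ 2) := by
  nlinarith [sq_nonneg w₃]

lemma le_one_of_sq (a : ℝ) (ha0 : 0 < a) (h : a ^ 2 ≤ 1) : a ≤ 1 := by nlinarith

lemma sqrt_final (S c ε : ℝ) (hε0 : 0 ≤ ε) (hc0 : 0 ≤ c) (hS : S ≤ 4 * ε * c) :
    Real.sqrt S ≤ 2 * Real.sqrt ε * Real.sqrt c := by
  have h : (2 * Real.sqrt ε * Real.sqrt c) ^ 2 = 4 * ε * c := by
    rw [mul_pow, mul_pow, Real.sq_sqrt hε0, Real.sq_sqrt hc0]; ring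
  calc Real.sqrt S ≤ Real.sqrt (4 * ε * c) := Real.sqrt_le_sqrt hS
    _ = 2 * Real.sqrt ε * Real.sqrt c := by
        rw [← h, Real.sqrt_sq (by positivity)]

/-- Lemma (stars): if a vector assignment to a `K`-star with center `v̂` earns at least
`K(1-ε)` on the `W`-stretched linear objective, then `W v̂` is close to the normalized
projection of `v̂` onto the axes of weight `1`. -/
theorem stmt0 (w₂ w₃ : ℝ) (hw₂ : w₂ ≤ 1) (hw₃₂ : w₃ ≤ w₂) (hw₃ : 0 ≤ w₃) (hw₃1 : w₃ < 1)
    (W : Matrix (Fin 3) (Fin 3) ℝ) (hW : W = Matrix.diagonal ![1, w₂, w₃])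
    (Pi : (Fin 3 → ℝ) → Fin 3 → ℝ)
    (hPi : ∀ y i, Pi y i = if (![(1 : ℝ), w₂, w₃]) i = 1 then y i else 0)
    (lam : ℝ) (hlam : lam = if w₂ < 1 then w₂ else w₃)
    (ε : ℝ) (hε0 : 0 ≤ ε) (hε1 : ε ≤ 1)
    (K : ℕ) (hK : 1 ≤ K)
    (v : Fin 3 → ℝ) (hv : norm3 v = 1)
    (x : Fin K → Fin 3 → ℝ) (hx : ∀ i, norm3 (x i) = 1)
    (hPv : Pi v ≠ 0)
    (hobj : (1 / 2) * ∑ i, norm3 (W.mulVec v - W.mulVec (x i)) ≥ (K : ℝ) * (1 - ε)) :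
    norm3 (W.mulVec v - (fun i => Pi v i / norm3 (Pi v))) ≤
      2 * Real.sqrt ε * Real.sqrt ((1 + lam ^ 2) / (1 - lam ^ 2)) := by
  subst hW
  have hw20 : 0 ≤ w₂ := le_trans hw₃ hw₃₂
  have hvs : v 0 ^ 2 + v 1 ^ 2 + v 2 ^ 2 = 1 := norm3_one hv
  have hWv2 : (Matrix.diagonal ![1, w₂, w₃]).mulVec v = ![v 0, w₂ * v 1, w₃ * v 2] := by
    funext i; fin_cases i <;> simp [Matrix.mulVec_diagonal]
  -- each stretched leaf vector has norm ≤ 1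
  have hxle : ∀ i, norm3 ((Matrix.diagonal ![1, w₂, w₃]).mulVec (x i)) ≤ 1 := by
    intro i
    have hys := norm3_one (hx i)
    have he : (Matrix.diagonal ![1, w₂, w₃]).mulVec (x i)
        = ![x i 0, w₂ * x i 1, w₃ * x i 2] := by
      funext j; fin_cases j <;> simp [Matrix.mulVec_diagonal]
    rw [he, norm3_vec]
    have hw2sq : w₂ ^ 2 ≤ 1 := by nlinarith
    have hw3sq : w₃ ^ 2 ≤ 1 := by nlinarith
    have hb : x i 0 ^ 2 + (w₂ * x i 1) ^ 2 + (w₃ * x i 2) ^ 2 ≤ 1 := by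
      nlinarith [mul_le_mul_of_nonneg_right hw2sq (sq_nonneg (x i 1)),
        mul_le_mul_of_nonneg_right hw3sq (sq_nonneg (x i 2))]
    have := Real.sqrt_le_sqrt hb
    rwa [Real.sqrt_one] at this
  -- the stretched center has norm ≥ 1 - 2ε
  have hsum_le : ∑ i, norm3 ((Matrix.diagonal ![1, w₂, w₃]).mulVec v
        - (Matrix.diagonal ![1, w₂, w₃]).mulVec (x i))
      ≤ (K : ℝ) * (norm3 ((Matrix.diagonal ![1, w₂, w₃]).mulVec v) + 1) := by
    calc ∑ i, norm3 ((Matrix.diagonal ![1, w₂, w₃]).mulVec v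
            - (Matrix.diagonal ![1, w₂, w₃]).mulVec (x i))
        ≤ ∑ _i : Fin K, (norm3 ((Matrix.diagonal ![1, w₂, w₃]).mulVec v) + 1) :=
          Finset.sum_le_sum (fun i _ => le_trans (norm3_sub_le _ _) (by linarith [hxle i]))
      _ = (K : ℝ) * (norm3 ((Matrix.diagonal ![1, w₂, w₃]).mulVec v) + 1) := by
          rw [Finset.sum_const, Finset.card_univ, Fintype.card_fin, nsmul_eq_mul]
  have hK1 : (1 : ℝ) ≤ (K : ℝ) := by exact_mod_cast hK
  have hn0 : 1 - 2 * ε ≤ norm3 ((Matrix.diagonal ![1, w₂, w₃]).mulVec v) := by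
    nlinarith [hobj, hsum_le]
  -- lam facts
  have hlam0 : 0 ≤ lam := by rw [hlam]; split <;> [exact hw20; exact hw₃]
  have hlam1 : lam < 1 := by rw [hlam]; split <;> [assumption; exact hw₃1]
  have hc0 : (0:ℝ) ≤ (1 + lam ^ 2) / (1 - lam ^ 2) :=
    div_nonneg (by positivity) (by nlinarith)
  by_cases hw2 : w₂ < 1
  · -- case lam = w₂, projection onto first coordinate
    have hlam' : lam = w₂ := by rw [hlam, if_pos hw2]
    have hPiv : Pi v = ![v 0, 0, 0] := by
      funext i; fin_cases i
      · rw [hPi]; simp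
      · rw [hPi]; simp [hw2.ne]
      · rw [hPi]; simp [hw₃1.ne]
    set a := norm3 (Pi v) with ha
    clear_value a
    have ha0 : 0 < a := by rw [ha]; exact norm3_pos hPv
    have ha2 : a ^ 2 = v 0 ^ 2 := by
      rw [ha, hPiv, norm3_vec]
      rw [show v 0 ^ 2 + 0 ^ 2 + 0 ^ 2 = v 0 ^ 2 by ring, Real.sq_sqrt (sq_nonneg _)]
    have ha1 : a ≤ 1 := le_one_of_sq a ha0 (by rw [ha2]; linarith [sq_nonneg (v 1), sq_nonneg (v 2)])
    have hQ0 : 0 ≤ w₂ ^ 2 * v 1 ^ 2 + w₃ ^ 2 * v 2 ^ 2 := by positivity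
    have hQle : w₂ ^ 2 * v 1 ^ 2 + w₃ ^ 2 * v 2 ^ 2 ≤ lam ^ 2 * (1 - a ^ 2) := by
      rw [hlam']
      exact QleA w₂ w₃ a (v 0) (v 1) (v 2) hw₃ hw₃₂ hvs ha2
    have hsqrtn : Real.sqrt (a ^ 2 + (w₂ ^ 2 * v 1 ^ 2 + w₃ ^ 2 * v 2 ^ 2))
        = norm3 ((Matrix.diagonal ![1, w₂, w₃]).mulVec v) := by
      rw [hWv2, norm3_vec, ha2]; congr 1; ring
    have hcore := core a _ lam ε ha0 ha1 hQ0 hQle hlam0 hlam1 hε0 (by rw [hsqrtn]; exact hn0)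
    have hane : a ≠ 0 := ne_of_gt ha0
    have hvec : (Matrix.diagonal ![1, w₂, w₃]).mulVec v - (fun i => Pi v i / a)
        = ![v 0 - v 0 / a, w₂ * v 1, w₃ * v 2] := by
      rw [hWv2, hPiv]; funext i; fin_cases i <;> simp
    have hS : norm3 ((Matrix.diagonal ![1, w₂, w₃]).mulVec v - fun i => Pi v i / a)
        = Real.sqrt ((a - 1) ^ 2 + (w₂ ^ 2 * v 1 ^ 2 + w₃ ^ 2 * v 2 ^ 2)) := by
      rw [hvec, norm3_vec]
      congr 1
      exact caseA_S a (v 0) (v 1) (v 2) w₂ w₃ hane ha2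
    rw [hS]
    exact sqrt_final _ _ _ hε0 hc0 hcore
  · -- case w₂ = 1, lam = w₃, projection onto first two coordinates
    have hw2e : w₂ = 1 := le_antisymm hw₂ (not_lt.mp hw2)
    subst hw2e
    have hlam' : lam = w₃ := by rw [hlam, if_neg hw2]
    have hPiv : Pi v = ![v 0, v 1, 0] := by
      funext i; fin_cases i
      · rw [hPi]; simp
      · rw [hPi]; simp
      · rw [hPi]; simp [hw₃1.ne]
    set a := norm3 (Pi v) with ha
    clear_value a
    have ha0 : 0 < a := by rw [ha]; exact norm3_pos hPv
    have ha2 : a ^ 2 = v 0 ^ 2 + v 1 ^ 2 := by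
      rw [ha, hPiv, norm3_vec]
      rw [show v 0 ^ 2 + v 1 ^ 2 + 0 ^ 2 = v 0 ^ 2 + v 1 ^ 2 by ring,
        Real.sq_sqrt (by positivity)]
    have ha1 : a ≤ 1 := le_one_of_sq a ha0 (by rw [ha2]; linarith [sq_nonneg (v 2)])
    have hQ0 : 0 ≤ w₃ ^ 2 * v 2 ^ 2 := by positivity
    have hQle : w₃ ^ 2 * v 2 ^ 2 ≤ lam ^ 2 * (1 - a ^ 2) := by
      rw [hlam']
      exact QleB w₃ a (v 0) (v 1) (v 2) hvs ha2
    have hsqrtn : Real.sqrt (a ^ 2 + w₃ ^ 2 * v 2 ^ 2)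
        = norm3 ((Matrix.diagonal ![1, 1, w₃]).mulVec v) := by
      rw [hWv2, norm3_vec, ha2]; congr 1; ring
    have hcore := core a _ lam ε ha0 ha1 hQ0 hQle hlam0 hlam1 hε0 (by rw [hsqrtn]; exact hn0)
    have hane : a ≠ 0 := ne_of_gt ha0
    have hvec : (Matrix.diagonal ![1, 1, w₃]).mulVec v - (fun i => Pi v i / a)
        = ![v 0 - v 0 / a, v 1 - v 1 / a, w₃ * v 2] := by
      rw [hWv2, hPiv]; funext i; fin_cases i <;> simp
    have hS : norm3 ((Matrix.diagonal ![1, 1, w₃]).mulVec v - fun i => Pi v i / a)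
        = Real.sqrt ((a - 1) ^ 2 + w₃ ^ 2 * v 2 ^ 2) := by
      rw [hvec, norm3_vec]
      congr 1
      exact caseB_S a (v 0) (v 1) (v 2) w₃ hane ha2
    rw [hS]
    exact sqrt_final _ _ _ hε0 hc0 hcore
end

section
/- Let A, B, C be points on the unit circle in ℝ² and let 0 ≤ ε < 1. If ‖A − B‖ + ‖B − C‖ + ‖A − C‖ ≥ 3√3 − ε, then each of the three distances ‖A − B‖, ‖B − C‖, ‖A − C‖ lies in the interval [√3 − 3√ε, √3 + 3√ε]. -/
/-!
Fix a side `xy` of the triangle and put `n = ‖x + y‖`, so that `‖x - y‖² + n² = 4` by the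
parallelogram law. For a third unit vector `z`, `‖z - x‖² + ‖z - y‖² = 4 - 2⟪z, x + y⟫ ≤ 4 + 2n`,
hence the other two sides add up to at most `2u` with `u = √(2 + n)`, and `a = ‖x - y‖` satisfies
`a² = u²(4 - u²)`. On this curve `a + 2u ≤ 3√3 - (a - √3)² / 9`, so a perimeter of at least
`3√3 - ε` forces `(a - √3)² ≤ 9ε`. The curve inequality is linear in `a` once `a²` is eliminated,
and after squaring it becomes a polynomial inequality in `u` alone, whose defect vanishes to
second order at the equilateral point `u = √3`.
-/

open Real

lemma sq_mul_four_sub_sq_le_sq {u : ℝ} (hu0 : 0 ≤ u) (hu2 : u ≤ 2) :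
    (9 - 2 * √3) ^ 2 * (u ^ 2 * (4 - u ^ 2)) ≤ (u ^ 4 - 4 * u ^ 2 - 18 * u + 27 * √3 - 3) ^ 2 := by
  have hr : √3 ^ 2 = 3 := sq_sqrt (by norm_num)
  have hr_lower : 1.7 ≤ √3 := by nlinarith [sqrt_nonneg 3]
  have hr_upper : √3 ≤ 1.8 := by nlinarith [sqrt_nonneg 3]
  set Q := u ^ 6 + 2 * √3 * u ^ 5 + u ^ 4 - (36 + 4 * √3) * u ^ 3 + (76 - 54 * √3) * u ^ 2
    + (164 * √3 - 72) * u + (732 - 54 * √3)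
  have hQ : 0 ≤ Q := by
    nlinarith [pow_nonneg hu0 3, pow_nonneg hu0 5, pow_nonneg hu0 6, sq_nonneg u,
      mul_nonneg (pow_nonneg hu0 3) (by linarith : (0 : ℝ) ≤ 2 - u),
      mul_nonneg (sq_nonneg u) (by linarith : (0 : ℝ) ≤ 2 - u)]
  have hfactor : (u ^ 4 - 4 * u ^ 2 - 18 * u + 27 * √3 - 3) ^ 2
      - (9 - 2 * √3) ^ 2 * (u ^ 2 * (4 - u ^ 2)) = (u - √3) ^ 2 * Q := by
    linear_combination (3 * u ^ 6 - 2 * √3 * u ^ 5 - 5 * u ^ 4 + (4 * √3 - 72) * u ^ 3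
      + (236 + 54 * √3) * u ^ 2 - (36 + 164 * √3) * u + (54 * √3 - 3)) * hr
  nlinarith [mul_nonneg (sq_nonneg (u - √3)) hQ]

lemma add_two_mul_le_of_sq_eq {a u : ℝ} (hu0 : 0 ≤ u) (hu2 : u ≤ 2)
    (h : a ^ 2 = u ^ 2 * (4 - u ^ 2)) : a + 2 * u ≤ 3 * √3 - (a - √3) ^ 2 / 9 := by
  have hr : √3 ^ 2 = 3 := sq_sqrt (by norm_num)
  have hr_lower : 1.7 ≤ √3 := by nlinarith [sqrt_nonneg 3]
  have hP : 0 ≤ u ^ 4 - 4 * u ^ 2 - 18 * u + 27 * √3 - 3 := by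
    nlinarith [sq_nonneg (u ^ 2 - 2)]
  have hlin : (9 - 2 * √3) * a ≤ u ^ 4 - 4 * u ^ 2 - 18 * u + 27 * √3 - 3 := by
    refine le_of_abs_le (abs_le_of_sq_le_sq ?_ hP)
    rw [mul_pow, h]
    exact sq_mul_four_sub_sq_le_sq hu0 hu2
  nlinarith

section InnerProductSpace

variable {E : Type*} [NormedAddCommGroup E] [InnerProductSpace ℝ E]

lemma norm_sub_add_norm_sub_le {x y z : E} (hx : ‖x‖ = 1) (hy : ‖y‖ = 1) (hz : ‖z‖ = 1) :
    ‖z - x‖ + ‖z - y‖ ≤ 2 * √(2 + ‖x + y‖) := by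
  have hinner : -‖x + y‖ ≤ inner ℝ z (x + y) := by
    have := abs_real_inner_le_norm z (x + y)
    rw [hz, one_mul] at this
    exact neg_le_of_abs_le this
  have hsq : ‖z - x‖ ^ 2 + ‖z - y‖ ^ 2 ≤ 4 + 2 * ‖x + y‖ := by
    rw [inner_add_right] at hinner
    rw [norm_sub_sq_real, norm_sub_sq_real, hx, hy, hz]
    linarith
  have hhalf : (‖z - x‖ + ‖z - y‖) / 2 ≤ √(2 + ‖x + y‖) :=
    le_sqrt_of_sq_le (by nlinarith [sq_nonneg (‖z - x‖ - ‖z - y‖)])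
  linarith

lemma norm_sub_mem_Icc_of_perimeter_ge {x y z : E} (hx : ‖x‖ = 1) (hy : ‖y‖ = 1)
    (hz : ‖z‖ = 1) {ε : ℝ} (h : 3 * √3 - ε ≤ ‖x - y‖ + ‖z - x‖ + ‖z - y‖) :
    ‖x - y‖ ∈ Set.Icc (√3 - 3 * √ε) (√3 + 3 * √ε) := by
  have hparallelogram : ‖x - y‖ ^ 2 + ‖x + y‖ ^ 2 = 4 := by
    have := parallelogram_law_with_norm ℝ x y
    rw [hx, hy] at this
    linarith
  have hn2 : ‖x + y‖ ≤ 2 := by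
    linarith [norm_add_le x y]
  set n := ‖x + y‖
  set u := √(2 + n)
  have hu_sq : u ^ 2 = 2 + n := sq_sqrt (by positivity)
  have hu2 : u ≤ 2 := sqrt_le_iff.mpr ⟨by norm_num, by linarith⟩
  have hcurve : ‖x - y‖ ^ 2 = u ^ 2 * (4 - u ^ 2) := by
    rw [hu_sq]; nlinarith
  have hbound := add_two_mul_le_of_sq_eq (sqrt_nonneg _) hu2 hcurve
  have hdev : |‖x - y‖ - √3| ≤ 3 * √ε := by
    calc |‖x - y‖ - √3| ≤ √(3 ^ 2 * ε) :=
          abs_le_sqrt (by linarith [norm_sub_add_norm_sub_le hx hy hz])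
      _ = 3 * √ε := by rw [sqrt_mul (by norm_num), sqrt_sq (by norm_num)]
  rw [abs_sub_le_iff] at hdev
  constructor <;> linarith

end InnerProductSpace

theorem stmt1_general (A B C : EuclideanSpace ℝ (Fin 2))
    (hA : ‖A‖ = 1) (hB : ‖B‖ = 1) (hC : ‖C‖ = 1)
    (ε : ℝ)
    (hper : ‖A - B‖ + ‖B - C‖ + ‖A - C‖ ≥ 3 * Real.sqrt 3 - ε) :
    ‖A - B‖ ∈ Set.Icc (Real.sqrt 3 - 3 * Real.sqrt ε) (Real.sqrt 3 + 3 * Real.sqrt ε) ∧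
    ‖B - C‖ ∈ Set.Icc (Real.sqrt 3 - 3 * Real.sqrt ε) (Real.sqrt 3 + 3 * Real.sqrt ε) ∧
    ‖A - C‖ ∈ Set.Icc (Real.sqrt 3 - 3 * Real.sqrt ε) (Real.sqrt 3 + 3 * Real.sqrt ε) := by
  have hCA := norm_sub_rev C A
  have hCB := norm_sub_rev C B
  have hBA := norm_sub_rev B A
  exact ⟨norm_sub_mem_Icc_of_perimeter_ge hA hB hC (by linarith),
    norm_sub_mem_Icc_of_perimeter_ge hB hC hA (by linarith),
    norm_sub_mem_Icc_of_perimeter_ge hA hC hB (by linarith)⟩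

/-- Lemma: a triangle inscribed in the unit circle with perimeter at least `3√3 - ε`
has all side lengths within `3√ε` of `√3`. -/
theorem stmt1 (A B C : EuclideanSpace ℝ (Fin 2))
    (hA : ‖A‖ = 1) (hB : ‖B‖ = 1) (hC : ‖C‖ = 1)
    (ε : ℝ) (hε0 : 0 ≤ ε) (hε1 : ε < 1)
    (hper : ‖A - B‖ + ‖B - C‖ + ‖A - C‖ ≥ 3 * Real.sqrt 3 - ε) :
    ‖A - B‖ ∈ Set.Icc (Real.sqrt 3 - 3 * Real.sqrt ε) (Real.sqrt 3 + 3 * Real.sqrt ε) ∧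
    ‖B - C‖ ∈ Set.Icc (Real.sqrt 3 - 3 * Real.sqrt ε) (Real.sqrt 3 + 3 * Real.sqrt ε) ∧
    ‖A - C‖ ∈ Set.Icc (Real.sqrt 3 - 3 * Real.sqrt ε) (Real.sqrt 3 + 3 * Real.sqrt ε) :=
  stmt1_general A B C hA hB hC ε hper
end

section
/- Let A, B, C, D be points on the unit sphere in ℝ³ and let ε ≥ 0. If the sum of the six pairwise distances ‖A − B‖ + ‖A − C‖ + ‖A − D‖ + ‖B − C‖ + ‖B − D‖ + ‖C − D‖ is at least 4√6 − ε, then each of the six pairwise distances lies in the interval [4√6/6 − 4√ε, 4√6/6 + 4√ε]. -/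
/-!
For unit vectors `A, B, C, D` the squared edge lengths sum to `16 - ‖A + B + C + D‖² ≤ 16`, so by
Cauchy–Schwarz the total edge length `P` is at most `√96 = 4√6`. The spread of the six lengths is
controlled by the same slack: `(6 dᵢ - P)² ≤ 6 (96 - P²) = 6 (4√6 - P)(4√6 + P) ≤ 48 √6 ε`, and
`|P - 4√6| ≤ ε`; together these put every edge within `4√ε` of the mean `4√6 / 6`.
-/

open Finset

theorem Finset.sum_sq_card_mul_sub_sum {ι : Type*} (s : Finset ι) (f : ι → ℝ) :
    ∑ j ∈ s, (#s * f j - ∑ i ∈ s, f i) ^ 2 =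
      #s * (#s * ∑ i ∈ s, f i ^ 2 - (∑ i ∈ s, f i) ^ 2) := by
  simp only [sub_sq, sum_add_distrib, sum_sub_distrib, mul_pow, ← mul_sum, ← sum_mul,
    sum_const, nsmul_eq_mul]
  ring

theorem Finset.sq_card_mul_sub_sum_le {ι : Type*} (s : Finset ι) (f : ι → ℝ) {i : ι}
    (hi : i ∈ s) :
    (#s * f i - ∑ j ∈ s, f j) ^ 2 ≤ #s * (#s * ∑ j ∈ s, f j ^ 2 - (∑ j ∈ s, f j) ^ 2) := by
  rw [← sum_sq_card_mul_sub_sum]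
  exact single_le_sum (f := fun j => (#s * f j - ∑ i ∈ s, f i) ^ 2)
    (fun j _ => sq_nonneg _) hi

theorem norm_sub_sq_add_norm_add_sq_four {E : Type*} [NormedAddCommGroup E]
    [InnerProductSpace ℝ E] (a b c d : E) :
    ‖a - b‖ ^ 2 + ‖a - c‖ ^ 2 + ‖a - d‖ ^ 2 + ‖b - c‖ ^ 2 + ‖b - d‖ ^ 2 + ‖c - d‖ ^ 2
      + ‖a + b + c + d‖ ^ 2 = 4 * (‖a‖ ^ 2 + ‖b‖ ^ 2 + ‖c‖ ^ 2 + ‖d‖ ^ 2) := by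
  simp only [← real_inner_self_eq_norm_sq, inner_add_left, inner_add_right, inner_sub_left,
    inner_sub_right, real_inner_comm a b, real_inner_comm a c, real_inner_comm a d,
    real_inner_comm b c, real_inner_comm b d, real_inner_comm c d]
  ring

theorem mem_Icc_of_sum_sq_le_of_le_sum (d : Fin 6 → ℝ) {ε : ℝ} (hε : 0 ≤ ε)
    (hsq : ∑ i, d i ^ 2 ≤ 16) (hsum : 4 * √6 - ε ≤ ∑ i, d i) (i : Fin 6) :
    d i ∈ Set.Icc (4 * √6 / 6 - 4 * √ε) (4 * √6 / 6 + 4 * √ε) := by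
  set P := ∑ i, d i
  have hr : √6 ^ 2 = 6 := Real.sq_sqrt (by norm_num)
  have hr_le : √6 ≤ 5 / 2 := by nlinarith [Real.sqrt_nonneg 6]
  have hs : √ε ^ 2 = ε := Real.sq_sqrt hε
  have hs0 : 0 ≤ √ε := Real.sqrt_nonneg ε
  have hP : -(4 * √6) ≤ P ∧ P ≤ 4 * √6 := by
    refine abs_le_of_sq_le_sq' ?_ (by positivity)
    have := sq_sum_le_card_mul_sum_sq (s := univ) (f := d)
    simp only [card_univ, Fintype.card_fin, Nat.cast_ofNat] at this
    nlinarith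
  have hdev : (6 * d i - P) ^ 2 ≤ (11 * √ε) ^ 2 := by
    have := sq_card_mul_sub_sum_le univ d (mem_univ i)
    simp only [card_univ, Fintype.card_fin, Nat.cast_ofNat] at this
    nlinarith [mul_le_mul_of_nonneg_right (show 4 * √6 - P ≤ ε by linarith)
      (show 0 ≤ 4 * √6 + P by linarith)]
  have hdev' := abs_le_of_sq_le_sq' hdev (by positivity)
  rw [← Set.mem_Icc_iff_abs_le, abs_le]
  rcases le_or_gt (√ε) 2 with hs_le | hs_gt
  · constructor <;> nlinarith
  · have hdi : d i ^ 2 ≤ 4 ^ 2 :=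
      (single_le_sum (f := fun j => d j ^ 2) (fun j _ => sq_nonneg _) (mem_univ i)).trans
        (by norm_num [hsq])
    have := abs_le_of_sq_le_sq' hdi (by norm_num)
    constructor <;> nlinarith

/-- Lemma: a tetrahedron inscribed in the unit sphere with total edge length at least
`4√6 - ε` has all edge lengths within `4√ε` of `4√6/6`. -/
theorem stmt3 (A B C D : EuclideanSpace ℝ (Fin 3))
    (hA : ‖A‖ = 1) (hB : ‖B‖ = 1) (hC : ‖C‖ = 1) (hD : ‖D‖ = 1)
    (ε : ℝ) (hε : 0 ≤ ε)
    (hper : ‖A - B‖ + ‖A - C‖ + ‖A - D‖ + ‖B - C‖ + ‖B - D‖ + ‖C - D‖ ≥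
      4 * Real.sqrt 6 - ε) :
    ‖A - B‖ ∈ Set.Icc (4 * Real.sqrt 6 / 6 - 4 * Real.sqrt ε) (4 * Real.sqrt 6 / 6 + 4 * Real.sqrt ε) ∧
    ‖A - C‖ ∈ Set.Icc (4 * Real.sqrt 6 / 6 - 4 * Real.sqrt ε) (4 * Real.sqrt 6 / 6 + 4 * Real.sqrt ε) ∧
    ‖A - D‖ ∈ Set.Icc (4 * Real.sqrt 6 / 6 - 4 * Real.sqrt ε) (4 * Real.sqrt 6 / 6 + 4 * Real.sqrt ε) ∧
    ‖B - C‖ ∈ Set.Icc (4 * Real.sqrt 6 / 6 - 4 * Real.sqrt ε) (4 * Real.sqrt 6 / 6 + 4 * Real.sqrt ε) ∧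
    ‖B - D‖ ∈ Set.Icc (4 * Real.sqrt 6 / 6 - 4 * Real.sqrt ε) (4 * Real.sqrt 6 / 6 + 4 * Real.sqrt ε) ∧
    ‖C - D‖ ∈ Set.Icc (4 * Real.sqrt 6 / 6 - 4 * Real.sqrt ε) (4 * Real.sqrt 6 / 6 + 4 * Real.sqrt ε) := by
  let d : Fin 6 → ℝ := ![‖A - B‖, ‖A - C‖, ‖A - D‖, ‖B - C‖, ‖B - D‖, ‖C - D‖]
  have hsq : ∑ i, d i ^ 2 ≤ 16 := by
    have := norm_sub_sq_add_norm_add_sq_four A B C D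
    simp only [Fin.sum_univ_six, d, Matrix.cons_val, hA, hB, hC, hD] at this ⊢
    nlinarith [sq_nonneg ‖A + B + C + D‖]
  have hsum : 4 * √6 - ε ≤ ∑ i, d i := by
    simpa only [Fin.sum_univ_six, d, Matrix.cons_val] using hper
  have key := mem_Icc_of_sum_sq_le_of_le_sum d hε hsq hsum
  exact ⟨key 0, key 1, key 2, key 3, key 4, key 5⟩
end

section
/- There is a universal constant C₀ > 0 such that the following holds. Let δ > 0, ε ≥ 0, and let A, B, C, D, E, F, G be points on the unit sphere in ℝ³ with ‖B − E‖ ≤ ε, such that each of the twelve pairwise distances among {A, B, C, D} and among {A, E, F, G} lies in the interval [4√6/6 − δ, 4√6/6 + δ]. Then either (‖C − F‖ ≤ C₀·(δ + ε) and ‖D − G‖ ≤ C₀·(δ + ε)) or (‖C − G‖ ≤ C₀·(δ + ε) and ‖D − F‖ ≤ C₀·(δ + ε)); that is, the points {C, D} are each within distance C₀·(δ + ε) of different points of {F, G}. -/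
/-!
Choose an orthonormal frame `e` with `e 0 = A` and `B` in the plane of `e 0, e 1`, and put
`η = 2δ + ε`. Each of `C, D, F, G` has inner product `-1/3 + O(η)` with both `A` and `B` (for `F, G`
via `E`), which determines its first two coordinates up to `O(η)` and forces the square of its
third coordinate to be about `2/3`. Two such points on the same side of the plane `span {A, B}`
are therefore `O(η)`-close, while the near-tetrahedral angle between `C` and `D` (and between `F`
and `G`) puts them on opposite sides. For `η > 1/100` the bound is trivial, the sphere having
diameter `2`.
-/

open Module RealInnerProductSpace InnerProductSpace

variable {V : Type*} [NormedAddCommGroup V] [InnerProductSpace ℝ V]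

theorem exists_orthonormalBasis_apply_zero_eq [FiniteDimensional ℝ V] (hV : finrank ℝ V = 3)
    {A : V} (hA : ‖A‖ = 1) (B : V) : ∃ e : OrthonormalBasis (Fin 3) ℝ V, e 0 = A ∧ ⟪e 2, B⟫ = 0 := by
  have hf : gramSchmidtNormed ℝ ![A, B, B] 0 = A := by
    rw [gramSchmidtNormed, show (0 : Fin 3) = ⊥ from rfl, gramSchmidt_bot]
    change ‖A‖⁻¹ • A = A
    simp [hA]
  refine ⟨gramSchmidtOrthonormalBasis hV ![A, B, B], ?_, ?_⟩
  · rw [gramSchmidtOrthonormalBasis_apply hV (by rw [hf]; rintro rfl; simp at hA), hf]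
  · exact gramSchmidtOrthonormalBasis_inv_triangular hV ![A, B, B] (i := 1) (j := 2) (by decide)

theorem OrthonormalBasis.inner_eq_fin_three (e : OrthonormalBasis (Fin 3) ℝ V) (X Y : V) :
    ⟪X, Y⟫ = ⟪e 0, X⟫ * ⟪e 0, Y⟫ + ⟪e 1, X⟫ * ⟪e 1, Y⟫ + ⟪e 2, X⟫ * ⟪e 2, Y⟫ := by
  simp [← e.sum_inner_mul_inner X Y, Fin.sum_univ_three, real_inner_comm X]

theorem OrthonormalBasis.norm_sq_eq_fin_three (e : OrthonormalBasis (Fin 3) ℝ V) (X : V) :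
    ‖X‖ ^ 2 = ⟪e 0, X⟫ ^ 2 + ⟪e 1, X⟫ ^ 2 + ⟪e 2, X⟫ ^ 2 := by
  simp [← e.sum_sq_inner_right X, Fin.sum_univ_three]

/-- `-1/3` is the cosine of the angle subtended at the centre by an edge of a regular tetrahedron
inscribed in the unit sphere; for unit vectors it means `‖X - Y‖ = 4√6/6`. -/
def NearTetrahedral (η : ℝ) (X Y : V) : Prop := |⟪X, Y⟫ + 1 / 3| ≤ η

def IsThirdVertex (η : ℝ) (A B X : V) : Prop :=
  ‖X‖ = 1 ∧ NearTetrahedral η A X ∧ NearTetrahedral η B X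

theorem NearTetrahedral.of_norm_sub_mem_Icc {δ : ℝ} {X Y : V} (hX : ‖X‖ = 1) (hY : ‖Y‖ = 1)
    (hδ : δ ≤ 1 / 100) (h : ‖X - Y‖ ∈ Set.Icc (4 * √6 / 6 - δ) (4 * √6 / 6 + δ)) :
    NearTetrahedral (2 * δ) X Y := by
  have hXY : ‖X - Y‖ ^ 2 = 2 - 2 * ⟪X, Y⟫ := by rw [norm_sub_sq_real, hX, hY]; ring
  have hsqrt : √6 ^ 2 = 6 := Real.sq_sqrt (by norm_num)
  have hsqrt_lt : √6 < 5 / 2 := by nlinarith [Real.sqrt_nonneg 6]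
  obtain ⟨hlo, hhi⟩ := h
  rw [NearTetrahedral, abs_le]
  constructor <;> nlinarith [norm_nonneg (X - Y), Real.sqrt_nonneg 6]

theorem NearTetrahedral.of_norm_sub_le {η ε : ℝ} {X Y Z : V} (h : NearTetrahedral η Y Z)
    (hZ : ‖Z‖ = 1) (hXY : ‖X - Y‖ ≤ ε) : NearTetrahedral (η + ε) X Z := by
  have hXZ := abs_real_inner_le_norm (X - Y) Z
  rw [inner_sub_left, hZ, mul_one, abs_le] at hXZ
  rw [NearTetrahedral, abs_le] at h ⊢
  constructor <;> linarith

theorem sq_sub_mul_le_sq_sq_sub {a b : ℝ} (h : 0 ≤ a * b) :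
    (a - b) ^ 2 * (a ^ 2 + b ^ 2) ≤ (a ^ 2 - b ^ 2) ^ 2 := by
  nlinarith [sq_nonneg (a - b)]

theorem mul_nonneg_or_of_mul_neg {a b c d : ℝ} (hab : a * b < 0) (hcd : c * d < 0) :
    (0 ≤ a * c ∧ 0 ≤ b * d) ∨ (0 ≤ a * d ∧ 0 ≤ b * c) := by
  rcases mul_neg_iff.mp hab with ⟨ha, hb⟩ | ⟨ha, hb⟩ <;>
    rcases mul_neg_iff.mp hcd with ⟨hc, hd⟩ | ⟨hc, hd⟩
  · exact .inl ⟨by nlinarith, by nlinarith⟩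
  · exact .inr ⟨by nlinarith, by nlinarith⟩
  · exact .inr ⟨by nlinarith, by nlinarith⟩
  · exact .inl ⟨by nlinarith, by nlinarith⟩

section Frame

variable (e : OrthonormalBasis (Fin 3) ℝ V) {η : ℝ} {B X Y : V}

theorem IsThirdVertex.coord_bounds (hη : η ≤ 1 / 100) (hB : ‖B‖ = 1) (hB₂ : ⟪e 2, B⟫ = 0)
    (hAB : NearTetrahedral η (e 0) B) (hX : IsThirdVertex η (e 0) B X) :
    ⟪e 0, X⟫ < 0 ∧ ⟪e 1, B⟫ * ⟪e 1, X⟫ < 0 ∧ |⟪e 1, X⟫| ≤ 1 / 2 ∧ 5 / 8 ≤ ⟪e 2, X⟫ ^ 2 := by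
  obtain ⟨hXn, hAX, hBX⟩ := hX
  rw [NearTetrahedral] at hAB hAX hBX
  have hp := e.norm_sq_eq_fin_three B
  have hx := e.norm_sq_eq_fin_three X
  rw [e.inner_eq_fin_three, hB₂] at hBX
  rw [hB, hB₂] at hp
  rw [hXn] at hx
  set p := ⟪e 0, B⟫
  set q := ⟪e 1, B⟫
  set x₀ := ⟪e 0, X⟫
  set x₁ := ⟪e 1, X⟫
  rw [abs_le] at hAB hAX hBX
  have hpx : 0 < p * x₀ := mul_pos_of_neg_of_neg (by linarith) (by linarith)
  have hpx_le : p * x₀ ≤ 1 / 8 := by nlinarith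
  have hq : 7 / 8 ≤ q ^ 2 := by nlinarith
  have hx₁ : x₁ ^ 2 ≤ (1 / 2) ^ 2 := by nlinarith [sq_nonneg (q * x₁)]
  refine ⟨by linarith, by nlinarith, abs_le_of_sq_le_sq hx₁ (by norm_num), by nlinarith⟩

theorem IsThirdVertex.inner_mul_neg (hη : η ≤ 1 / 100) (hB : ‖B‖ = 1) (hB₂ : ⟪e 2, B⟫ = 0)
    (hAB : NearTetrahedral η (e 0) B) (hX : IsThirdVertex η (e 0) B X)
    (hY : IsThirdVertex η (e 0) B Y) (hXY : NearTetrahedral η X Y) :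
    ⟪e 2, X⟫ * ⟪e 2, Y⟫ < 0 := by
  obtain ⟨hx₀, hqx₁, -, -⟩ := hX.coord_bounds e hη hB hB₂ hAB
  obtain ⟨hy₀, hqy₁, -, -⟩ := hY.coord_bounds e hη hB hB₂ hAB
  rw [NearTetrahedral, e.inner_eq_fin_three, abs_le] at hXY
  have h₀ : 0 < ⟪e 0, X⟫ * ⟪e 0, Y⟫ := mul_pos_of_neg_of_neg hx₀ hy₀
  have h₁ : 0 ≤ ⟪e 1, X⟫ * ⟪e 1, Y⟫ := by
    have := mul_pos_of_neg_of_neg hqx₁ hqy₁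
    nlinarith [sq_nonneg ⟪e 1, B⟫]
  linarith

theorem IsThirdVertex.abs_sub_coord_le (hη : η ≤ 1 / 100) (hB : ‖B‖ = 1) (hB₂ : ⟪e 2, B⟫ = 0)
    (hAB : NearTetrahedral η (e 0) B) (hX : IsThirdVertex η (e 0) B X)
    (hY : IsThirdVertex η (e 0) B Y) :
    |⟪e 0, X⟫ - ⟪e 0, Y⟫| ≤ 2 * η ∧ |⟪e 1, X⟫ - ⟪e 1, Y⟫| ≤ 3 * η := by
  obtain ⟨-, hAX, hBX⟩ := hX
  obtain ⟨-, hAY, hBY⟩ := hY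
  have hp := e.norm_sq_eq_fin_three B
  rw [hB, hB₂] at hp
  rw [NearTetrahedral, abs_le] at hAB hAX hAY
  rw [NearTetrahedral, e.inner_eq_fin_three, hB₂, abs_le] at hBX hBY
  set p := ⟪e 0, B⟫
  set q := ⟪e 1, B⟫
  have hd₀ : |⟪e 0, X⟫ - ⟪e 0, Y⟫| ≤ 2 * η := abs_le.mpr ⟨by linarith, by linarith⟩
  have hpd : |p * (⟪e 0, X⟫ - ⟪e 0, Y⟫)| ≤ 7 / 20 * (2 * η) := by
    rw [abs_mul]
    exact mul_le_mul (abs_le.mpr ⟨by linarith, by linarith⟩) hd₀ (abs_nonneg _) (by norm_num)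
  have hqd : (q * (⟪e 1, X⟫ - ⟪e 1, Y⟫)) ^ 2 ≤ (27 / 10 * η) ^ 2 := by
    rw [abs_le] at hpd
    apply sq_le_sq' <;> linarith
  have hq : 7 / 8 ≤ q ^ 2 := by nlinarith
  refine ⟨hd₀, abs_le_of_sq_le_sq ?_ (by linarith)⟩
  nlinarith [mul_le_mul_of_nonneg_right hq (sq_nonneg (⟪e 1, X⟫ - ⟪e 1, Y⟫))]

theorem IsThirdVertex.norm_sub_le (hη : η ≤ 1 / 100) (hB : ‖B‖ = 1) (hB₂ : ⟪e 2, B⟫ = 0)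
    (hAB : NearTetrahedral η (e 0) B) (hX : IsThirdVertex η (e 0) B X)
    (hY : IsThirdVertex η (e 0) B Y) (hside : 0 ≤ ⟪e 2, X⟫ * ⟪e 2, Y⟫) :
    ‖X - Y‖ ≤ 6 * η := by
  obtain ⟨hd₀, hd₁⟩ := hX.abs_sub_coord_le e hη hB hB₂ hAB hY
  obtain ⟨-, -, hx₁, hx₂⟩ := hX.coord_bounds e hη hB hB₂ hAB
  obtain ⟨-, -, hy₁, hy₂⟩ := hY.coord_bounds e hη hB hB₂ hAB
  have hx := e.norm_sq_eq_fin_three X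
  have hy := e.norm_sq_eq_fin_three Y
  rw [hX.1] at hx
  rw [hY.1] at hy
  have hAX := hX.2.1
  have hAY := hY.2.1
  rw [NearTetrahedral, abs_le] at hAX hAY
  have hη₀ : 0 ≤ η := by linarith
  rw [← sq_le_sq₀ (norm_nonneg _) (by linarith), e.norm_sq_eq_fin_three]
  simp only [inner_sub_right]
  set x₀ := ⟪e 0, X⟫
  set x₁ := ⟪e 1, X⟫
  set x₂ := ⟪e 2, X⟫
  set y₀ := ⟪e 0, Y⟫
  set y₁ := ⟪e 1, Y⟫
  set y₂ := ⟪e 2, Y⟫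
  have h₀ : |(x₀ - y₀) * (x₀ + y₀)| ≤ 2 * η * (7 / 10) := by
    rw [abs_mul]
    exact mul_le_mul hd₀ (abs_le.mpr ⟨by linarith, by linarith⟩) (abs_nonneg _) (by linarith)
  have h₁ : |(x₁ - y₁) * (x₁ + y₁)| ≤ 3 * η * 1 := by
    rw [abs_mul]
    exact mul_le_mul hd₁ ((abs_add_le _ _).trans (by linarith)) (abs_nonneg _) (by linarith)
  have h₂ : (x₂ ^ 2 - y₂ ^ 2) ^ 2 ≤ (9 / 2 * η) ^ 2 := by
    have : x₂ ^ 2 - y₂ ^ 2 = -((x₀ - y₀) * (x₀ + y₀)) - (x₁ - y₁) * (x₁ + y₁) := by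
      linear_combination hy - hx
    rw [this]
    rw [abs_le] at h₀ h₁
    apply sq_le_sq' <;> linarith
  have h₃ : (x₂ - y₂) ^ 2 * (5 / 4) ≤ (9 / 2 * η) ^ 2 :=
    calc (x₂ - y₂) ^ 2 * (5 / 4) ≤ (x₂ - y₂) ^ 2 * (x₂ ^ 2 + y₂ ^ 2) :=
          mul_le_mul_of_nonneg_left (by linarith) (sq_nonneg _)
      _ ≤ (x₂ ^ 2 - y₂ ^ 2) ^ 2 := sq_sub_mul_le_sq_sq_sub hside
      _ ≤ (9 / 2 * η) ^ 2 := h₂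
  rw [abs_le] at hd₀ hd₁
  nlinarith [sq_le_sq' hd₀.1 hd₀.2, sq_le_sq' hd₁.1 hd₁.2]

theorem IsThirdVertex.norm_sub_le_or_swap (hη : η ≤ 1 / 100) (hB : ‖B‖ = 1)
    (hB₂ : ⟪e 2, B⟫ = 0) (hAB : NearTetrahedral η (e 0) B) {C D F G : V}
    (hC : IsThirdVertex η (e 0) B C) (hD : IsThirdVertex η (e 0) B D)
    (hF : IsThirdVertex η (e 0) B F) (hG : IsThirdVertex η (e 0) B G)
    (hCD : NearTetrahedral η C D) (hFG : NearTetrahedral η F G) :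
    (‖C - F‖ ≤ 6 * η ∧ ‖D - G‖ ≤ 6 * η) ∨ (‖C - G‖ ≤ 6 * η ∧ ‖D - F‖ ≤ 6 * η) := by
  rcases mul_nonneg_or_of_mul_neg (hC.inner_mul_neg e hη hB hB₂ hAB hD hCD)
      (hF.inner_mul_neg e hη hB hB₂ hAB hG hFG) with ⟨hCF, hDG⟩ | ⟨hCG, hDF⟩
  · exact .inl ⟨hC.norm_sub_le e hη hB hB₂ hAB hF hCF, hD.norm_sub_le e hη hB hB₂ hAB hG hDG⟩
  · exact .inr ⟨hC.norm_sub_le e hη hB hB₂ hAB hG hCG, hD.norm_sub_le e hη hB hB₂ hAB hF hDF⟩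

end Frame

/-- Lemma: two tetrahedra inscribed in the unit sphere sharing a vertex `A`, whose
vertices `B` and `E` are within `ε` of each other, and all of whose edge lengths are
within `δ` of `4√6/6`, have their remaining vertices pairwise within `O(δ + ε)` of
each other (matched up in one of the two possible ways). -/
theorem stmt4 :
    ∃ C₀ : ℝ, C₀ > 0 ∧
      ∀ (δ ε : ℝ), 0 < δ → 0 ≤ ε →
        ∀ A B C D E F G : EuclideanSpace ℝ (Fin 3),
          ‖A‖ = 1 → ‖B‖ = 1 → ‖C‖ = 1 → ‖D‖ = 1 → ‖E‖ = 1 → ‖F‖ = 1 → ‖G‖ = 1 →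
          ‖B - E‖ ≤ ε →
          ‖A - B‖ ∈ Set.Icc (4 * Real.sqrt 6 / 6 - δ) (4 * Real.sqrt 6 / 6 + δ) →
          ‖A - C‖ ∈ Set.Icc (4 * Real.sqrt 6 / 6 - δ) (4 * Real.sqrt 6 / 6 + δ) →
          ‖A - D‖ ∈ Set.Icc (4 * Real.sqrt 6 / 6 - δ) (4 * Real.sqrt 6 / 6 + δ) →
          ‖B - C‖ ∈ Set.Icc (4 * Real.sqrt 6 / 6 - δ) (4 * Real.sqrt 6 / 6 + δ) →
          ‖B - D‖ ∈ Set.Icc (4 * Real.sqrt 6 / 6 - δ) (4 * Real.sqrt 6 / 6 + δ) →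
          ‖C - D‖ ∈ Set.Icc (4 * Real.sqrt 6 / 6 - δ) (4 * Real.sqrt 6 / 6 + δ) →
          ‖A - E‖ ∈ Set.Icc (4 * Real.sqrt 6 / 6 - δ) (4 * Real.sqrt 6 / 6 + δ) →
          ‖A - F‖ ∈ Set.Icc (4 * Real.sqrt 6 / 6 - δ) (4 * Real.sqrt 6 / 6 + δ) →
          ‖A - G‖ ∈ Set.Icc (4 * Real.sqrt 6 / 6 - δ) (4 * Real.sqrt 6 / 6 + δ) →
          ‖E - F‖ ∈ Set.Icc (4 * Real.sqrt 6 / 6 - δ) (4 * Real.sqrt 6 / 6 + δ) →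
          ‖E - G‖ ∈ Set.Icc (4 * Real.sqrt 6 / 6 - δ) (4 * Real.sqrt 6 / 6 + δ) →
          ‖F - G‖ ∈ Set.Icc (4 * Real.sqrt 6 / 6 - δ) (4 * Real.sqrt 6 / 6 + δ) →
          ((‖C - F‖ ≤ C₀ * (δ + ε) ∧ ‖D - G‖ ≤ C₀ * (δ + ε)) ∨
           (‖C - G‖ ≤ C₀ * (δ + ε) ∧ ‖D - F‖ ≤ C₀ * (δ + ε))) := by
  refine ⟨400, by norm_num, fun δ ε hδ hε A B C D E F G hA hB hC hD hE hF hG hBE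
    hAB hAC hAD hBC hBD hCD _ hAF hAG hEF hEG hFG => ?_⟩
  set η := 2 * δ + ε
  rcases le_or_gt η (1 / 100) with hη | hη
  · have hδ' : δ ≤ 1 / 100 := by linarith
    have near : ∀ {X Y : EuclideanSpace ℝ (Fin 3)}, ‖X‖ = 1 → ‖Y‖ = 1 →
        ‖X - Y‖ ∈ Set.Icc (4 * √6 / 6 - δ) (4 * √6 / 6 + δ) → NearTetrahedral η X Y :=
      fun hX hY h => le_trans (NearTetrahedral.of_norm_sub_mem_Icc hX hY hδ' h) (by linarith)
    have nearB : ∀ {X : EuclideanSpace ℝ (Fin 3)}, ‖X‖ = 1 →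
        ‖E - X‖ ∈ Set.Icc (4 * √6 / 6 - δ) (4 * √6 / 6 + δ) → NearTetrahedral η B X :=
      fun hX h => (NearTetrahedral.of_norm_sub_mem_Icc hE hX hδ' h).of_norm_sub_le hX hBE
    obtain ⟨e, rfl, hB₂⟩ := exists_orthonormalBasis_apply_zero_eq finrank_euclideanSpace_fin hA B
    have h6 : 6 * η ≤ 400 * (δ + ε) := by linarith
    exact (IsThirdVertex.norm_sub_le_or_swap e hη hB hB₂ (near hA hB hAB)
      ⟨hC, near hA hC hAC, near hB hC hBC⟩ ⟨hD, near hA hD hAD, near hB hD hBD⟩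
      ⟨hF, near hA hF hAF, nearB hF hEF⟩ ⟨hG, near hA hG hAG, nearB hG hEG⟩
      (near hC hD hCD) (near hF hG hFG)).imp
      (And.imp (·.trans h6) (·.trans h6)) (And.imp (·.trans h6) (·.trans h6))
  · have hfar : ∀ {X Y : EuclideanSpace ℝ (Fin 3)}, ‖X‖ = 1 → ‖Y‖ = 1 →
        ‖X - Y‖ ≤ 400 * (δ + ε) :=
      fun hX hY => (norm_sub_le _ _).trans (by rw [hX, hY]; linarith)
    exact .inl ⟨hfar hC hF, hfar hD hG⟩
end

section
/- Let V₁, V₂, V₃, V₄ be points on the unit sphere in ℝ³ and, for each pair 1 ≤ i < j ≤ 4, let v_{ij} be a point on the unit sphere. Define L² = ∑_{1 ≤ i < j ≤ 4} (‖V_i − V_j‖² + ‖v_{ij} − V_i‖² + ‖v_{ij} − V_j‖²). Then L² ≤ 40 + 8√3. -/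
/-!
For unit vectors `a, b, w` we have `‖w - a‖² + ‖w - b‖² = 4 - 2⟪w, a + b⟫ ≤ 4 + 2‖a + b‖`, and
`2‖a + b‖` is bounded by a quadratic in `‖a + b‖`, tight at `⟪a, b⟫ = -1/3`, the angle of the regular
tetrahedron. Since `‖a ± b‖² = 2 ± 2⟪a, b⟫`, each edge with its adjoined triangle contributes at most
`6 + 5√3/3 + (√3 - 2)⟪a, b⟫`. Summing over the six edges, the sum of the `⟪V i, V j⟫` is
`(‖∑ V i‖² - 4) / 2 ≥ -2`, and `√3 - 2 < 0` gives the bound `40 + 8√3`.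
-/

open Real Finset RealInnerProductSpace

lemma two_mul_le_sqrt_three_mul_sq_add (s : ℝ) :
    2 * s ≤ √3 / 2 * s ^ 2 + 2 * √3 / 3 := by
  have h3 : √3 ^ 2 = 3 := sq_sqrt (by norm_num)
  have hsq : √3 / 2 * s ^ 2 + 2 * √3 / 3 - 2 * s = √3 / 6 * (√3 * s - 2) ^ 2 := by
    linear_combination (2 / 3 * s - √3 / 6 * s ^ 2) * h3
  rw [← sub_nonneg, hsq]
  positivity

section InnerProductSpace

variable {E : Type*} [NormedAddCommGroup E] [InnerProductSpace ℝ E]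

lemma norm_sub_sq_add_norm_sub_sq_le_of_norm_eq_one {a b w : E}
    (ha : ‖a‖ = 1) (hb : ‖b‖ = 1) (hw : ‖w‖ = 1) :
    ‖a - b‖ ^ 2 + ‖w - a‖ ^ 2 + ‖w - b‖ ^ 2 ≤ 6 + 5 * √3 / 3 + (√3 - 2) * ⟪a, b⟫ := by
  have hab_sub : ‖a - b‖ ^ 2 = 2 - 2 * ⟪a, b⟫ := by rw [norm_sub_sq_real, ha, hb]; ring
  have hab_add : ‖a + b‖ ^ 2 = 2 + 2 * ⟪a, b⟫ := by rw [norm_add_sq_real, ha, hb]; ring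
  have hw_sides : ‖w - a‖ ^ 2 + ‖w - b‖ ^ 2 = 4 - 2 * ⟪w, a + b⟫ := by
    rw [norm_sub_sq_real, norm_sub_sq_real, inner_add_right, ha, hb, hw]; ring
  have hw_inner : -‖a + b‖ ≤ ⟪w, a + b⟫ := by
    have := real_inner_le_norm (-w) (a + b)
    rwa [inner_neg_left, norm_neg, hw, one_mul, neg_le] at this
  have hamgm := two_mul_le_sqrt_three_mul_sq_add ‖a + b‖
  rw [hab_add] at hamgm
  linarith

lemma two_mul_sum_sum_ite_lt_inner {ι : Type*} [Fintype ι] [LinearOrder ι] (x : ι → E) :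
    2 * ∑ i, ∑ j, (if i < j then ⟪x i, x j⟫ else 0) = ‖∑ i, x i‖ ^ 2 - ∑ i, ‖x i‖ ^ 2 := by
  have hsplit : ∀ i j, ⟪x i, x j⟫ = (if i < j then ⟪x i, x j⟫ else 0) +
      (if j < i then ⟪x j, x i⟫ else 0) + (if i = j then ‖x i‖ ^ 2 else 0) := by
    intro i j
    rcases lt_trichotomy i j with h | rfl | h
    · simp [h, h.not_gt, h.ne]
    · simp
    · simp [h, h.not_gt, h.ne', real_inner_comm]
  have hexpand : ‖∑ i, x i‖ ^ 2 = ∑ i, ∑ j, ⟪x i, x j⟫ := by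
    rw [← real_inner_self_eq_norm_sq, sum_inner]
    simp only [inner_sum]
  rw [hexpand, sum_congr rfl fun i _ => sum_congr rfl fun j _ => hsplit i j]
  simp only [sum_add_distrib, sum_ite_eq, mem_univ, if_true]
  rw [sum_comm (f := fun i j => if j < i then ⟪x j, x i⟫ else 0)]
  ring

end InnerProductSpace

/-- Lemma: for a "tetrahedron with adjoined triangles" inscribed in the unit sphere,
the sum of the squared edge lengths is at most `40 + 8√3`. -/
theorem stmt5 (V : Fin 4 → EuclideanSpace ℝ (Fin 3))
    (v : Fin 4 → Fin 4 → EuclideanSpace ℝ (Fin 3))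
    (hV : ∀ i, ‖V i‖ = 1) (hv : ∀ i j, i < j → ‖v i j‖ = 1) :
    (∑ i : Fin 4, ∑ j : Fin 4, if i < j then
        ‖V i - V j‖ ^ 2 + ‖v i j - V i‖ ^ 2 + ‖v i j - V j‖ ^ 2 else 0) ≤
      40 + 8 * Real.sqrt 3 := by
  have hpairs := two_mul_sum_sum_ite_lt_inner V
  simp only [hV, one_pow, sum_const, card_univ, Fintype.card_fin, nsmul_eq_mul] at hpairs
  have hsum : -2 ≤ ∑ i : Fin 4, ∑ j : Fin 4, (if i < j then ⟪V i, V j⟫ else 0) := by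
    push_cast at hpairs; linarith [sq_nonneg ‖∑ i, V i‖]
  have hsqrt : √3 ≤ 2 := by
    rw [sqrt_le_left (by norm_num)]; norm_num
  calc _ ≤ ∑ i : Fin 4, ∑ j : Fin 4,
        if i < j then 6 + 5 * √3 / 3 + (√3 - 2) * ⟪V i, V j⟫ else 0 := by
        gcongr with i _ j _
        split_ifs with hij
        · exact norm_sub_sq_add_norm_sub_sq_le_of_norm_eq_one (hV i) (hV j) (hv i j hij)
        · rfl
    _ = 6 * (6 + 5 * √3 / 3) + (√3 - 2) * ∑ i : Fin 4, ∑ j : Fin 4,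
        (if i < j then ⟪V i, V j⟫ else 0) := by
        simp only [Fin.sum_univ_four, Fin.reduceLT, ↓reduceIte]; ring
    _ ≤ 40 + 8 * √3 := by linarith [mul_le_mul_of_nonpos_left hsum (by linarith : √3 - 2 ≤ 0)]
end

section
/- There is a constant c > 0 such that the following holds. Let V₁, V₂, V₃, V₄ be points on the unit sphere in ℝ³ and, for each pair 1 ≤ i < j ≤ 4, let v_{ij} be a point on the unit sphere, and define L² = ∑_{1 ≤ i < j ≤ 4} (‖V_i − V_j‖² + ‖v_{ij} − V_i‖² + ‖v_{ij} − V_j‖²). For any 0 < ε ≤ 1, if some distance ‖V_i − V_j‖ (1 ≤ i < j ≤ 4) lies outside the interval [4/√6 − ε, 4/√6 + ε], then L² < 40 + 8√3 − c·ε². -/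
local notation "⟪" x ", " y "⟫" => @inner ℝ _ _ x y

variable {E : Type*} [NormedAddCommGroup E] [InnerProductSpace ℝ E]

lemma hb_poly (u r : ℝ) (hr : r ^ 2 = 3) (hr0 : 0 < r) (hu0 : 0 ≤ u) (hu2 : u ≤ 2) :
    (4 - u ^ 2) + 2 * u ≤ 8/3 + 4 * r / 3
      + (1 - r / 2) * ((4 - u ^ 2) - 8/3) - (1/32) * ((4 - u ^ 2) - 8/3) ^ 2 := by
  have hr1 : 1 < r := by nlinarith
  have hbr : 0 ≤ r / 2 - (1/32) * (u + 2 * r / 3) ^ 2 := by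
    nlinarith [mul_nonneg hu0 (sub_nonneg.mpr hu2),
      mul_le_mul_of_nonneg_left hu2 hr0.le]
  nlinarith [mul_nonneg (sq_nonneg (u - 2 * r / 3)) hbr]

/-- quadratic upper bound for h(t) = t + 2√(4-t) on [0,4] -/
lemma hbound_aux (t : ℝ) (h0 : 0 ≤ t) (h4 : t ≤ 4) :
    t + 2 * Real.sqrt (4 - t) ≤ 8/3 + 4 * Real.sqrt 3 / 3
      + (1 - Real.sqrt 3 / 2) * (t - 8/3) - (1/32) * (t - 8/3) ^ 2 := by
  have hu : (Real.sqrt (4 - t)) ^ 2 = 4 - t := Real.sq_sqrt (by linarith)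
  have hu0 : 0 ≤ Real.sqrt (4 - t) := Real.sqrt_nonneg _
  have hu2 : Real.sqrt (4 - t) ≤ 2 := by nlinarith
  have key := hb_poly (Real.sqrt (4 - t)) (Real.sqrt 3)
    (Real.sq_sqrt (by norm_num)) (Real.sqrt_pos.mpr (by norm_num)) hu0 hu2
  rw [hu] at key
  linarith

/-- per-edge bound -/
lemma edge_aux (a b w : E) (ha : ‖a‖ = 1) (hb : ‖b‖ = 1) (hw : ‖w‖ = 1) :
    ‖a - b‖ ^ 2 + (‖w - a‖ ^ 2 + ‖w - b‖ ^ 2) ≤ 4 + (8/3 + 4 * Real.sqrt 3 / 3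
      + (1 - Real.sqrt 3 / 2) * (‖a - b‖ ^ 2 - 8/3)
      - (1/32) * (‖a - b‖ ^ 2 - 8/3) ^ 2) := by
  have hab : ‖a + b‖ ^ 2 = 4 - ‖a - b‖ ^ 2 := by
    have h1 := norm_add_sq_real a b
    have h2 := norm_sub_sq_real a b
    rw [ha, hb] at h1 h2
    norm_num at h1 h2
    linarith
  have habs := abs_real_inner_le_norm w (a + b)
  rw [hw, one_mul] at habs
  obtain ⟨hl, _⟩ := abs_le.mp habs
  have hsum : ‖w - a‖ ^ 2 + ‖w - b‖ ^ 2 = 4 - 2 * ⟪w, a + b⟫ := by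
    have h1 := norm_sub_sq_real w a
    have h2 := norm_sub_sq_real w b
    rw [hw, ha] at h1
    rw [hw, hb] at h2
    rw [h1, h2, inner_add_right]
    ring
  have hsq : Real.sqrt (4 - ‖a - b‖ ^ 2) = ‖a + b‖ := by
    rw [← hab, Real.sqrt_sq (norm_nonneg _)]
  have htri : ‖w - a‖ ^ 2 + ‖w - b‖ ^ 2 ≤ 4 + 2 * Real.sqrt (4 - ‖a - b‖ ^ 2) := by
    rw [hsum, hsq]; linarith
  have ht0 : 0 ≤ ‖a - b‖ ^ 2 := sq_nonneg _
  have ht4 : ‖a - b‖ ^ 2 ≤ 4 := by nlinarith [sq_nonneg ‖a + b‖]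
  have := hbound_aux (‖a - b‖ ^ 2) ht0 ht4
  linarith

/-- sum of squared tetrahedron edges is at most 16 -/
lemma sum16_aux (V : Fin 4 → E) (hV : ∀ i, ‖V i‖ = 1) :
    ‖V 0 - V 1‖ ^ 2 + ‖V 0 - V 2‖ ^ 2 + ‖V 0 - V 3‖ ^ 2
      + ‖V 1 - V 2‖ ^ 2 + ‖V 1 - V 3‖ ^ 2 + ‖V 2 - V 3‖ ^ 2 ≤ 16 := by
  have hs : (0:ℝ) ≤ ‖V 0 + V 1 + V 2 + V 3‖ ^ 2 := sq_nonneg _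
  have e1 := norm_add_sq_real (V 0 + V 1 + V 2) (V 3)
  have e2 := norm_add_sq_real (V 0 + V 1) (V 2)
  have e3 := norm_add_sq_real (V 0) (V 1)
  simp only [inner_add_left] at e1 e2
  simp only [hV, one_pow] at e1 e2 e3
  have d : ∀ i j : Fin 4, ‖V i - V j‖ ^ 2 = 2 - 2 * ⟪V i, V j⟫ := by
    intro i j
    have h := norm_sub_sq_real (V i) (V j)
    simp only [hV, one_pow] at h
    linarith
  rw [d 0 1, d 0 2, d 0 3, d 1 2, d 1 3, d 2 3]
  rw [e1, e2, e3] at hs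
  linarith

/-- witness gives quantitative deviation -/
lemma wit_aux (d ε : ℝ) (hd0 : 0 ≤ d) (hε : 0 < ε) (hε1 : ε ≤ 1)
    (hout : d ∉ Set.Icc (4 / Real.sqrt 6 - ε) (4 / Real.sqrt 6 + ε)) :
    ε ^ 2 < (d ^ 2 - 8/3) ^ 2 := by
  have h6 : Real.sqrt 6 ^ 2 = 6 := Real.sq_sqrt (by norm_num)
  have h60 : 0 < Real.sqrt 6 := Real.sqrt_pos.mpr (by norm_num)
  have hd0sq : (4 / Real.sqrt 6) ^ 2 = 8/3 := by
    rw [div_pow, h6]; norm_num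
  have h64 : Real.sqrt 6 < 4 := by nlinarith
  have hd01 : 1 < 4 / Real.sqrt 6 := (one_lt_div h60).mpr h64
  rw [Set.mem_Icc, not_and_or] at hout
  rcases hout with h | h
  · push_neg at h
    have hdlt : d < 4 / Real.sqrt 6 - ε := by linarith
    have hsq : d ^ 2 < (4 / Real.sqrt 6 - ε) ^ 2 := by nlinarith
    have hX : ε < 8/3 - d ^ 2 := by nlinarith [mul_pos (sub_pos.mpr hd01) hε]
    nlinarith [mul_pos (sub_pos.mpr hX) (show (0:ℝ) < 8/3 - d ^ 2 + ε by linarith)]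
  · push_neg at h
    have hdgt : 4 / Real.sqrt 6 + ε < d := by linarith
    have hsq : (4 / Real.sqrt 6 + ε) ^ 2 < d ^ 2 := by nlinarith
    have hX : ε < d ^ 2 - 8/3 := by nlinarith [mul_pos (sub_pos.mpr hd01) hε]
    nlinarith [mul_pos (sub_pos.mpr hX) (show (0:ℝ) < d ^ 2 - 8/3 + ε by linarith)]

set_option maxHeartbeats 1600000 in
/-- Lemma: there is a constant `c > 0` such that for any "tetrahedron with adjoined
triangles" inscribed in the unit sphere, if some tetrahedron edge length lies outside
`[4/√6 - ε, 4/√6 + ε]` (with `0 < ε ≤ 1`), then the sum of the squared edge lengths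
is less than `40 + 8√3 - c ε²`. -/
theorem stmt6 :
    ∃ c : ℝ, c > 0 ∧
      ∀ (V : Fin 4 → EuclideanSpace ℝ (Fin 3))
        (v : Fin 4 → Fin 4 → EuclideanSpace ℝ (Fin 3)),
        (∀ i, ‖V i‖ = 1) → (∀ i j, i < j → ‖v i j‖ = 1) →
        ∀ ε : ℝ, 0 < ε → ε ≤ 1 →
        (∃ i j : Fin 4, i < j ∧
            ‖V i - V j‖ ∉ Set.Icc (4 / Real.sqrt 6 - ε) (4 / Real.sqrt 6 + ε)) →
        (∑ i : Fin 4, ∑ j : Fin 4, if i < j then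
            ‖V i - V j‖ ^ 2 + ‖v i j - V i‖ ^ 2 + ‖v i j - V j‖ ^ 2 else 0) <
          40 + 8 * Real.sqrt 3 - c * ε ^ 2 := by
  refine ⟨1/32, by norm_num, ?_⟩
  intro V v hV hv ε hε hε1 hex
  obtain ⟨i, j, hij, hout⟩ := hex
  have hijgen : ∀ i j : Fin 4, i < j → ((i = 0 ∧ j = 1) ∨ (i = 0 ∧ j = 2) ∨ (i = 0 ∧ j = 3)
      ∨ (i = 1 ∧ j = 2) ∨ (i = 1 ∧ j = 3) ∨ (i = 2 ∧ j = 3)) := by decide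
  have hr : Real.sqrt 3 ^ 2 = 3 := Real.sq_sqrt (by norm_num)
  have hr0 : 0 < Real.sqrt 3 := Real.sqrt_pos.mpr (by norm_num)
  have hr2 : Real.sqrt 3 ≤ 2 := by nlinarith
  have B01 := edge_aux (V 0) (V 1) (v 0 1) (hV 0) (hV 1) (hv 0 1 (by decide))
  have B02 := edge_aux (V 0) (V 2) (v 0 2) (hV 0) (hV 2) (hv 0 2 (by decide))
  have B03 := edge_aux (V 0) (V 3) (v 0 3) (hV 0) (hV 3) (hv 0 3 (by decide))
  have B12 := edge_aux (V 1) (V 2) (v 1 2) (hV 1) (hV 2) (hv 1 2 (by decide))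
  have B13 := edge_aux (V 1) (V 3) (v 1 3) (hV 1) (hV 3) (hv 1 3 (by decide))
  have B23 := edge_aux (V 2) (V 3) (v 2 3) (hV 2) (hV 3) (hv 2 3 (by decide))
  have h16 := sum16_aux V hV
  have hprod : (1 - Real.sqrt 3 / 2) *
      ((‖V 0 - V 1‖ ^ 2 + ‖V 0 - V 2‖ ^ 2 + ‖V 0 - V 3‖ ^ 2
        + ‖V 1 - V 2‖ ^ 2 + ‖V 1 - V 3‖ ^ 2 + ‖V 2 - V 3‖ ^ 2) - 16) ≤ 0 :=
    mul_nonpos_of_nonneg_of_nonpos (by linarith) (by linarith)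
  have hwit : ε ^ 2 < (‖V i - V j‖ ^ 2 - 8/3) ^ 2 :=
    wit_aux _ _ (norm_nonneg _) hε hε1 hout
  have s01 := sq_nonneg (‖V 0 - V 1‖ ^ 2 - 8/3)
  have s02 := sq_nonneg (‖V 0 - V 2‖ ^ 2 - 8/3)
  have s03 := sq_nonneg (‖V 0 - V 3‖ ^ 2 - 8/3)
  have s12 := sq_nonneg (‖V 1 - V 2‖ ^ 2 - 8/3)
  have s13 := sq_nonneg (‖V 1 - V 3‖ ^ 2 - 8/3)
  have s23 := sq_nonneg (‖V 2 - V 3‖ ^ 2 - 8/3)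
  simp only [Fin.sum_univ_four, Fin.reduceLT, reduceIte]
  rcases hijgen i j hij with ⟨rfl, rfl⟩ | ⟨rfl, rfl⟩ | ⟨rfl, rfl⟩ | ⟨rfl, rfl⟩ | ⟨rfl, rfl⟩ | ⟨rfl, rfl⟩
  · linarith [B01, B02, B03, B12, B13, B23, h16, hprod, hwit, s01, s02, s03, s12, s13, s23]
  · linarith [B01, B02, B03, B12, B13, B23, h16, hprod, hwit, s01, s02, s03, s12, s13, s23]
  · linarith [B01, B02, B03, B12, B13, B23, h16, hprod, hwit, s01, s02, s03, s12, s13, s23]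
  · linarith [B01, B02, B03, B12, B13, B23, h16, hprod, hwit, s01, s02, s03, s12, s13, s23]
  · linarith [B01, B02, B03, B12, B13, B23, h16, hprod, hwit, s01, s02, s03, s12, s13, s23]
  · linarith [B01, B02, B03, B12, B13, B23, h16, hprod, hwit, s01, s02, s03, s12, s13, s23]
end

section
/- For a 2×2 complex matrix P and k ∈ {1,2,3,4}, let P^{(k)} denote the 16×16 matrix obtained from the fourfold Kronecker product that has P in the k-th factor and I₂ in the other three factors. Define the 16×16 complex matrix B = (X^{(1)} − X^{(3)})·(Z^{(2)} − Z^{(4)}) − (Z^{(1)} − Z^{(3)})·(X^{(2)} − X^{(4)}). Then: (i) for all r¹, r², r³, r⁴ ∈ ℝ³, the trace of B·(ρ(r¹) ⊗ ρ(r²) ⊗ ρ(r³) ⊗ ρ(r⁴)) equals (r¹ − r³)ᵀ W' (r² − r⁴), where W' is the 3×3 real matrix with W'₁₃ = 1, W'₃₁ = −1, and all other entries 0; and (ii) for any fixed r¹, r³ ∈ ℝ³, the minimum of (r¹ − r³)ᵀ W' (r² − r⁴) over all unit vectors r², r⁴ ∈ ℝ³ equals −2·‖diag(1,0,1)·(r¹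 − r³)‖. -/
open Matrix
open scoped Kronecker

/-- The Pauli matrix X. -/
def pauliX : Matrix (Fin 2) (Fin 2) ℂ := !![0, 1; 1, 0]

/-- The Pauli matrix Z. -/
def pauliZ : Matrix (Fin 2) (Fin 2) ℂ := !![1, 0; 0, -1]

/-- The index type of the fourfold Kronecker product of `2×2` matrices. -/
abbrev Q4 := ((Fin 2 × Fin 2) × Fin 2) × Fin 2

/-- `emb P k` is the fourfold Kronecker product with `P` in the `k`-th factor and the
identity in the other three factors. -/
def emb (P : Matrix (Fin 2) (Fin 2) ℂ) : Fin 4 → Matrix Q4 Q4 ℂ :=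
  ![((P ⊗ₖ (1 : Matrix (Fin 2) (Fin 2) ℂ)) ⊗ₖ (1 : Matrix (Fin 2) (Fin 2) ℂ)) ⊗ₖ
      (1 : Matrix (Fin 2) (Fin 2) ℂ),
    (((1 : Matrix (Fin 2) (Fin 2) ℂ) ⊗ₖ P) ⊗ₖ (1 : Matrix (Fin 2) (Fin 2) ℂ)) ⊗ₖ
      (1 : Matrix (Fin 2) (Fin 2) ℂ),
    (((1 : Matrix (Fin 2) (Fin 2) ℂ) ⊗ₖ (1 : Matrix (Fin 2) (Fin 2) ℂ)) ⊗ₖ P) ⊗ₖ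
      (1 : Matrix (Fin 2) (Fin 2) ℂ),
    (((1 : Matrix (Fin 2) (Fin 2) ℂ) ⊗ₖ (1 : Matrix (Fin 2) (Fin 2) ℂ)) ⊗ₖ
      (1 : Matrix (Fin 2) (Fin 2) ℂ)) ⊗ₖ P]

/-- The Bloch matrix `ρ(r) = (1/2)(I + r₁X + r₂Y + r₃Z)`. -/
noncomputable def bloch (r : Fin 3 → ℝ) : Matrix (Fin 2) (Fin 2) ℂ :=
  (1 / 2 : ℂ) • ((1 : Matrix (Fin 2) (Fin 2) ℂ) +
    (r 0 : ℂ) • pauliX + (r 1 : ℂ) • !![0, -Complex.I; Complex.I, 0] +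
    (r 2 : ℂ) • pauliZ)

lemma tr_bloch (r : Fin 3 → ℝ) : Matrix.trace (bloch r) = 1 := by
  simp [bloch, pauliX, pauliZ, Matrix.trace_fin_two]

lemma trX (r : Fin 3 → ℝ) : Matrix.trace (pauliX * bloch r) = (r 0 : ℂ) := by
  simp [bloch, pauliX, pauliZ, Matrix.trace_fin_two, Matrix.mul_apply, Fin.sum_univ_succ,
    Matrix.vecMul, dotProduct, Matrix.one_apply]
  ring

lemma trZ (r : Fin 3 → ℝ) : Matrix.trace (pauliZ * bloch r) = (r 2 : ℂ) := by
  simp [bloch, pauliX, pauliZ, Matrix.trace_fin_two, Matrix.mul_apply, Fin.sum_univ_succ,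
    Matrix.vecMul, dotProduct, Matrix.one_apply]
  ring

lemma norm3_eq_one (x y z : ℝ) (h : x^2 + y^2 + z^2 = 1) : norm3 ![x,y,z] = 1 := by
  unfold norm3
  rw [Fin.sum_univ_three]
  simp only [Matrix.cons_val_zero, Matrix.cons_val_one, Matrix.head_cons, Matrix.cons_val_two,
    Matrix.tail_cons]
  rw [h, Real.sqrt_one]

lemma norm3_sum (r : Fin 3 → ℝ) (h : norm3 r = 1) : r 0 ^ 2 + r 1 ^ 2 + r 2 ^ 2 = 1 := by
  have hnn : (0:ℝ) ≤ ∑ i, r i ^ 2 := by positivity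
  have h2' := Real.sq_sqrt hnn
  rw [show Real.sqrt (∑ i, r i ^ 2) = norm3 r from rfl, h] at h2'
  rw [Fin.sum_univ_three] at h2'
  linarith [h2']

/-- The antisymmetric symmetrization gadget
`B = (X⁽¹⁾-X⁽³⁾)(Z⁽²⁾-Z⁽⁴⁾) - (Z⁽¹⁾-Z⁽³⁾)(X⁽²⁾-X⁽⁴⁾)`:
(i) its expectation on a product of Bloch matrices is `(r¹-r³)ᵀ W' (r²-r⁴)` with
`W' = !![0,0,1;0,0,0;-1,0,0]`, and (ii) for fixed `r¹, r³` the minimum of this quantity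
over unit vectors `r², r⁴` is `-2‖diag(1,0,1)(r¹-r³)‖`. -/
theorem stmt9 (B : Matrix Q4 Q4 ℂ)
    (hB : B = (emb pauliX 0 - emb pauliX 2) * (emb pauliZ 1 - emb pauliZ 3) -
        (emb pauliZ 0 - emb pauliZ 2) * (emb pauliX 1 - emb pauliX 3))
    (W' : Matrix (Fin 3) (Fin 3) ℝ) (hW' : W' = !![0, 0, 1; 0, 0, 0; -1, 0, 0]) :
    (∀ r1 r2 r3 r4 : Fin 3 → ℝ,
      Matrix.trace (B * (((bloch r1 ⊗ₖ bloch r2) ⊗ₖ bloch r3) ⊗ₖ bloch r4)) =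
        (((r1 - r3) ⬝ᵥ W'.mulVec (r2 - r4) : ℝ) : ℂ)) ∧
    (∀ r1 r3 : Fin 3 → ℝ,
      IsLeast
        {y : ℝ | ∃ r2 r4 : Fin 3 → ℝ, norm3 r2 = 1 ∧ norm3 r4 = 1 ∧
          y = (r1 - r3) ⬝ᵥ W'.mulVec (r2 - r4)}
        (-2 * norm3 ((Matrix.diagonal ![1, 0, 1]).mulVec (r1 - r3)))) := by
  constructor
  · intro r1 r2 r3 r4
    have e : ∀ P : Matrix (Fin 2) (Fin 2) ℂ,
        emb P 0 = ((P ⊗ₖ 1) ⊗ₖ 1) ⊗ₖ 1 ∧ emb P 1 = ((1 ⊗ₖ P) ⊗ₖ 1) ⊗ₖ 1 ∧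
        emb P 2 = ((1 ⊗ₖ 1) ⊗ₖ P) ⊗ₖ 1 ∧ emb P 3 = ((1 ⊗ₖ 1) ⊗ₖ 1) ⊗ₖ P := by
      intro P; exact ⟨rfl, rfl, rfl, rfl⟩
    rw [hB, (e pauliX).1, (e pauliX).2.2.1, (e pauliZ).2.1, (e pauliZ).2.2.2,
      (e pauliZ).1, (e pauliZ).2.2.1, (e pauliX).2.1, (e pauliX).2.2.2]
    simp only [Matrix.sub_mul, Matrix.mul_sub, ← Matrix.mul_kronecker_mul, Matrix.one_mul,
      Matrix.mul_one, Matrix.trace_sub, Matrix.trace_kronecker, trX, trZ, tr_bloch]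
    simp [hW', Matrix.mulVec, dotProduct, Fin.sum_univ_succ]
    ring
  · intro r1 r3
    set a := r1 0 - r3 0 with ha
    set c := r1 2 - r3 2 with hc
    have hval : ∀ r2 r4 : Fin 3 → ℝ, (r1 - r3) ⬝ᵥ W'.mulVec (r2 - r4) =
        a * (r2 2 - r4 2) - c * (r2 0 - r4 0) := by
      intro r2 r4
      simp [hW', Matrix.mulVec, dotProduct, Fin.sum_univ_succ, ha, hc]
      ring
    have hs : norm3 ((Matrix.diagonal ![1, 0, 1]).mulVec (r1 - r3)) = Real.sqrt (a^2 + c^2) := by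
      simp [norm3, Matrix.mulVec_diagonal, Fin.sum_univ_succ, Matrix.mulVec, dotProduct,
        Matrix.diagonal, ha, hc]
    set s := Real.sqrt (a^2 + c^2) with hsdef
    have hs0 : 0 ≤ s := Real.sqrt_nonneg _
    have hs2 : s^2 = a^2 + c^2 := Real.sq_sqrt (by positivity)
    rw [hs]
    constructor
    · by_cases h : s = 0
      · refine ⟨![1,0,0], ![1,0,0], norm3_eq_one 1 0 0 (by norm_num),
          norm3_eq_one 1 0 0 (by norm_num), ?_⟩
        have ha0 : a = 0 := by nlinarith [sq_nonneg a, sq_nonneg c, h ▸ hs2]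
        have hc0 : c = 0 := by nlinarith [sq_nonneg a, sq_nonneg c, h ▸ hs2]
        rw [hval]; simp [ha0, hc0, h]
      · have hspos : 0 < s := lt_of_le_of_ne hs0 (Ne.symm h)
        refine ⟨![c/s, 0, -a/s], ![-c/s, 0, a/s],
          norm3_eq_one _ _ _ (by field_simp; linarith [hs2]),
          norm3_eq_one _ _ _ (by field_simp; linarith [hs2]), ?_⟩
        rw [hval]
        simp only [Matrix.cons_val_zero, Matrix.cons_val_one, Matrix.head_cons,
          Matrix.cons_val_two, Matrix.tail_cons]
        field_simp
        nlinarith [hs2]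
    · rintro y ⟨r2, r4, h2, h4, rfl⟩
      rw [hval]
      have key : ∀ r : Fin 3 → ℝ, norm3 r = 1 → |a * r 2 - c * r 0| ≤ s := by
        intro r hr
        have h1 := norm3_sum r hr
        rw [← Real.sqrt_sq_eq_abs, hsdef]
        apply Real.sqrt_le_sqrt
        nlinarith [sq_nonneg (a * r 0 + c * r 2), sq_nonneg (r 1),
          mul_nonneg (by positivity : (0:ℝ) ≤ a^2 + c^2) (sq_nonneg (r 1))]
      have k2 := abs_le.mp (key r2 h2)
      have k4 := abs_le.mp (key r4 h4)
      nlinarith [k2.1, k4.2]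
end

section
/- Let P and Q be unit vectors in ℝ³. Then the maximum of ‖v − P‖² + ‖v − Q‖² over all unit vectors v ∈ ℝ³ equals 4 + √(16 − 4‖P − Q‖²). -/
/-! The sum `‖v - P‖² + ‖v - Q‖²` equals `4 - 2⟪v, P + Q⟫` on the unit sphere, so it is maximised
by minimising `⟪v, P + Q⟫`, whose minimum `-‖P + Q‖` is attained at `v = -(P + Q)/‖P + Q‖`
(or anywhere when `P + Q = 0`). The parallelogram law gives `‖P + Q‖² = 4 - ‖P - Q‖²`. -/

open RealInnerProductSpace

section

variable {E : Type*} [NormedAddCommGroup E] [InnerProductSpace ℝ E]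

theorem exists_norm_eq_one_inner_eq_neg_norm [Nontrivial E] (w : E) :
    ∃ v : E, ‖v‖ = 1 ∧ ⟪v, w⟫ = -‖w‖ := by
  rcases eq_or_ne w 0 with rfl | hw
  · obtain ⟨v, hv⟩ := exists_norm_eq E zero_le_one
    exact ⟨v, hv, by simp⟩
  · have hw' : ‖w‖ ≠ 0 := norm_ne_zero_iff.mpr hw
    refine ⟨-(‖w‖⁻¹ • w), ?_, ?_⟩
    · rw [norm_neg, norm_smul, norm_inv, norm_norm, inv_mul_cancel₀ hw']
    · rw [inner_neg_left, real_inner_smul_left, real_inner_self_eq_norm_sq]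
      field_simp

theorem neg_norm_le_inner_of_norm_eq_one {v : E} (hv : ‖v‖ = 1) (w : E) : -‖w‖ ≤ ⟪v, w⟫ := by
  have h := abs_real_inner_le_norm v w
  rw [hv, one_mul] at h
  exact neg_le_of_abs_le h

theorem norm_sub_sq_add_norm_sub_sq_of_norm_eq_one {v P Q : E} (hv : ‖v‖ = 1) (hP : ‖P‖ = 1)
    (hQ : ‖Q‖ = 1) : ‖v - P‖ ^ 2 + ‖v - Q‖ ^ 2 = 4 - 2 * ⟪v, P + Q⟫ := by
  rw [norm_sub_sq_real, norm_sub_sq_real, inner_add_right, hv, hP, hQ]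
  ring

theorem sqrt_sixteen_sub_four_mul_norm_sub_sq {P Q : E} (hP : ‖P‖ = 1) (hQ : ‖Q‖ = 1) :
    Real.sqrt (16 - 4 * ‖P - Q‖ ^ 2) = 2 * ‖P + Q‖ := by
  have parallelogram := parallelogram_law_with_norm ℝ P Q
  rw [hP, hQ] at parallelogram
  rw [show 16 - 4 * ‖P - Q‖ ^ 2 = (2 * ‖P + Q‖) ^ 2 by linarith,
    Real.sqrt_sq (by positivity)]

end

/-- Lemma: for unit vectors `P, Q` in `ℝ³`, the maximum of `‖v-P‖² + ‖v-Q‖²` over unit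
vectors `v` equals `4 + √(16 - 4‖P-Q‖²)`. -/
theorem stmt11 (P Q : EuclideanSpace ℝ (Fin 3)) (hP : ‖P‖ = 1) (hQ : ‖Q‖ = 1) :
    IsGreatest
      {x : ℝ | ∃ v : EuclideanSpace ℝ (Fin 3), ‖v‖ = 1 ∧
        x = ‖v - P‖ ^ 2 + ‖v - Q‖ ^ 2}
      (4 + Real.sqrt (16 - 4 * ‖P - Q‖ ^ 2)) := by
  rw [sqrt_sixteen_sub_four_mul_norm_sub_sq hP hQ]
  constructor
  · obtain ⟨v, hv, hinner⟩ := exists_norm_eq_one_inner_eq_neg_norm (P + Q)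
    refine ⟨v, hv, ?_⟩
    rw [norm_sub_sq_add_norm_sub_sq_of_norm_eq_one hv hP hQ, hinner]
    ring
  · rintro x ⟨v, hv, rfl⟩
    rw [norm_sub_sq_add_norm_sub_sq_of_norm_eq_one hv hP hQ]
    linarith [neg_norm_le_inner_of_norm_eq_one hv (P + Q)]
end

section
/- Let W = diag(1, β, γ) with 1 > β ≥ γ ≥ 0. Let G = (V, E) be a finite simple graph with n vertices and m edges, let K = m³·n, and construct the graph H by attaching to each vertex v ∈ V exactly K new leaf vertices, each adjacent only to v (so v becomes the center of a K-star). Then for every integer C ≥ 0: if MC(G) ≥ C, then WLMC_W(H) ≥ C + K·n. -/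
open scoped Classical

/-- The `W`-stretched linear max-cut value of a finite simple graph:
`(1/2) maxₓ ∑_{uv ∈ E} ‖W x(u) - W x(v)‖` over assignments of unit vectors in `ℝ³` to
the vertices (each unordered edge is counted twice in the double sum, whence the `1/4`). -/
noncomputable def wlmc {V : Type} [Fintype V] (W : Matrix (Fin 3) (Fin 3) ℝ)
    (G : SimpleGraph V) : ℝ :=
  sSup {c : ℝ | ∃ x : V → Fin 3 → ℝ, (∀ u, norm3 (x u) = 1) ∧
    c = (1 / 4) * ∑ u, ∑ v,
      if G.Adj u v then norm3 (W.mulVec (x u) - W.mulVec (x v)) else 0}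

/-- The max-cut value of a finite simple graph: the maximum, over ±1-labelings
(modeled by `Bool`-labelings), of the number of edges whose endpoints get different
labels (each cut edge is counted twice in the double sum, whence the division by 2). -/
noncomputable def maxCut {V : Type} [Fintype V] (G : SimpleGraph V) : ℕ :=
  sSup {k : ℕ | ∃ y : V → Bool,
    k = (∑ u, ∑ v, if G.Adj u v ∧ y u ≠ y v then 1 else 0) / 2}

/-- The graph obtained from `G` by attaching `K` new leaves to every vertex, so that
each vertex of `G` becomes the center of a `K`-star. -/
def addLeaves {V : Type} (G : SimpleGraph V) (K : ℕ) : SimpleGraph (V ⊕ V × Fin K) :=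
  SimpleGraph.fromRel fun a b =>
    match a, b with
    | Sum.inl u, Sum.inl v => G.Adj u v
    | Sum.inl u, Sum.inr (v, _) => u = v
    | _, _ => False

lemma norm3_single (c : ℝ) : norm3 ![c, 0, 0] = |c| := by
  simp [norm3, Fin.sum_univ_three, Real.sqrt_sq_eq_abs]

lemma mulVec_diag_single (β γ c : ℝ) :
    (Matrix.diagonal ![1, β, γ]).mulVec ![c, 0, 0] = ![c, 0, 0] := by
  funext i
  fin_cases i <;> simp [Matrix.mulVec_diagonal]

lemma wlmc_bdd {U : Type} [Fintype U] (β γ : ℝ) (hβ1 : β ≤ 1) (hβ0 : 0 ≤ β)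
    (hγ1 : γ ≤ 1) (hγ0 : 0 ≤ γ) (H : SimpleGraph U) :
    BddAbove {c : ℝ | ∃ x : U → Fin 3 → ℝ, (∀ u, norm3 (x u) = 1) ∧
      c = (1 / 4) * ∑ u, ∑ v, if H.Adj u v then
        norm3 ((Matrix.diagonal ![1, β, γ]).mulVec (x u)
          - (Matrix.diagonal ![1, β, γ]).mulVec (x v)) else 0} := by
  refine ⟨(Fintype.card U : ℝ) ^ 2, ?_⟩
  rintro c ⟨x, hx, rfl⟩
  have hxi : ∀ u i, x u i ^ 2 ≤ 1 := by
    intro u i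
    have h1 : ∑ j, x u j ^ 2 = 1 := by
      have := hx u; rw [norm3, Real.sqrt_eq_one] at this; exact this
    calc x u i ^ 2 ≤ ∑ j, x u j ^ 2 :=
          Finset.single_le_sum (f := fun j => x u j ^ 2) (fun j _ => sq_nonneg _) (Finset.mem_univ i)
      _ = 1 := h1
  have hd : ∀ i : Fin 3, (![1, β, γ] : Fin 3 → ℝ) i ^ 2 ≤ 1 := by
    intro i; fin_cases i <;> simp [abs_le] <;> constructor <;> nlinarith
  have hterm : ∀ u v, (if H.Adj u v then
      norm3 ((Matrix.diagonal ![1, β, γ]).mulVec (x u)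
        - (Matrix.diagonal ![1, β, γ]).mulVec (x v)) else 0) ≤ 4 := by
    intro u v
    split_ifs with h
    · have hc : ∀ i, (((Matrix.diagonal ![1, β, γ]).mulVec (x u)
          - (Matrix.diagonal ![1, β, γ]).mulVec (x v)) i) ^ 2 ≤ 4 := by
        intro i
        have he : ((Matrix.diagonal ![1, β, γ]).mulVec (x u)
            - (Matrix.diagonal ![1, β, γ]).mulVec (x v)) i
            = (![1, β, γ] : Fin 3 → ℝ) i * (x u i - x v i) := by
          simp [Matrix.mulVec_diagonal]; ring
        rw [he]
        have h2 : (x u i - x v i) ^ 2 ≤ 4 := by nlinarith [hxi u i, hxi v i, sq_nonneg (x u i + x v i)]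
        nlinarith [hd i, sq_nonneg ((![1, β, γ] : Fin 3 → ℝ) i), sq_nonneg (x u i - x v i)]
      have h16 : norm3 ((Matrix.diagonal ![1, β, γ]).mulVec (x u)
          - (Matrix.diagonal ![1, β, γ]).mulVec (x v)) ≤ Real.sqrt 16 := by
        rw [norm3]
        apply Real.sqrt_le_sqrt
        calc ∑ i, (((Matrix.diagonal ![1, β, γ]).mulVec (x u)
              - (Matrix.diagonal ![1, β, γ]).mulVec (x v)) i) ^ 2
            ≤ ∑ _i : Fin 3, (4 : ℝ) := Finset.sum_le_sum fun i _ => hc i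
          _ ≤ 16 := by norm_num
      calc norm3 _ ≤ Real.sqrt 16 := h16
        _ = 4 := by
          rw [show (16 : ℝ) = 4 ^ 2 by norm_num, Real.sqrt_sq (by norm_num : (0:ℝ) ≤ 4)]
    · norm_num
  calc (1/4 : ℝ) * ∑ u, ∑ v, (if H.Adj u v then
        norm3 ((Matrix.diagonal ![1, β, γ]).mulVec (x u)
          - (Matrix.diagonal ![1, β, γ]).mulVec (x v)) else 0)
      ≤ (1/4 : ℝ) * ∑ _u : U, ∑ _v : U, (4 : ℝ) := by
        apply mul_le_mul_of_nonneg_left _ (by norm_num)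
        exact Finset.sum_le_sum fun u _ => Finset.sum_le_sum fun v _ => hterm u v
    _ = (Fintype.card U : ℝ) ^ 2 := by
        simp [Finset.sum_const, Finset.card_univ]; ring

/-- If `MC(G) ≥ C` then `WLMC_W(H) ≥ C + K·n`, for `W = diag(1,β,γ)` with
`1 > β ≥ γ ≥ 0`, where `H` attaches `K = m³·n` leaves to every vertex of `G`. -/
theorem stmt14 (β γ : ℝ) (hβ : β < 1) (hγβ : γ ≤ β) (hγ : 0 ≤ γ)
    {V : Type} [Fintype V] [DecidableEq V] (G : SimpleGraph V) [DecidableRel G.Adj]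
    (n m K : ℕ) (hn : n = Fintype.card V) (hm : m = G.edgeFinset.card)
    (hK : K = m ^ 3 * n)
    (C : ℕ) (hMC : maxCut G ≥ C) :
    wlmc (Matrix.diagonal ![1, β, γ]) (addLeaves G K) ≥ (C : ℝ) + (K : ℝ) * n := by
  have hβ0 : 0 ≤ β := le_trans hγ hγβ
  -- extract a max-cut witness
  obtain ⟨y, hy⟩ : ∃ y : V → Bool, maxCut G
      = (∑ u, ∑ v, if G.Adj u v ∧ y u ≠ y v then 1 else 0) / 2 := by
    have hne : {k : ℕ | ∃ y : V → Bool,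
        k = (∑ u, ∑ v, if G.Adj u v ∧ y u ≠ y v then 1 else 0) / 2}.Nonempty :=
      ⟨_, fun _ => false, rfl⟩
    have hbd : BddAbove {k : ℕ | ∃ y : V → Bool,
        k = (∑ u, ∑ v, if G.Adj u v ∧ y u ≠ y v then 1 else 0) / 2} := by
      refine ⟨(Fintype.card V) ^ 2, ?_⟩
      rintro k ⟨y, rfl⟩
      have : (∑ u, ∑ v, if G.Adj u v ∧ y u ≠ y v then 1 else 0)
          ≤ ∑ _u : V, ∑ _v : V, 1 := by
        refine Finset.sum_le_sum fun u _ => Finset.sum_le_sum fun v _ => ?_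
        split_ifs <;> omega
      simp only [Finset.sum_const, Finset.card_univ, smul_eq_mul, mul_one] at this
      calc _ ≤ (∑ u, ∑ v, if G.Adj u v ∧ y u ≠ y v then 1 else 0) := Nat.div_le_self _ _
        _ ≤ Fintype.card V * Fintype.card V := this
        _ = Fintype.card V ^ 2 := (sq _).symm
    obtain ⟨y, hy⟩ := Nat.sSup_mem hne hbd
    refine ⟨y, ?_⟩
    have hset : maxCut G = sSup {k : ℕ | ∃ y : V → Bool,
        k = (∑ u, ∑ v, if G.Adj u v ∧ y u ≠ y v then 1 else 0) / 2} := by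
      unfold maxCut
      congr!
    rw [hset]
    exact hy
  set s : ℕ := ∑ u, ∑ v, if G.Adj u v ∧ y u ≠ y v then 1 else 0 with hs
  have hsC : 2 * C ≤ s := by
    have : C ≤ s / 2 := by rw [← hy]; exact hMC
    omega
  -- the assignment of unit vectors
  let ev : Bool → ℝ := fun b => if b then 1 else -1
  let e : Bool → Fin 3 → ℝ := fun b => ![ev b, 0, 0]
  let lab : V ⊕ V × Fin K → Bool := fun a =>
    match a with
    | Sum.inl u => y u
    | Sum.inr (v, _) => !(y v)
  let x : V ⊕ V × Fin K → Fin 3 → ℝ := fun a => e (lab a)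
  have he1 : ∀ a, norm3 (x a) = 1 := by
    intro a
    show norm3 ![ev (lab a), 0, 0] = 1
    rw [norm3_single]
    cases lab a <;> simp [ev]
  have hediff : ∀ b c : Bool,
      norm3 ((Matrix.diagonal ![1, β, γ]).mulVec (e b)
        - (Matrix.diagonal ![1, β, γ]).mulVec (e c)) = if b = c then 0 else 2 := by
    intro b c
    show norm3 ((Matrix.diagonal ![1, β, γ]).mulVec ![ev b, 0, 0]
        - (Matrix.diagonal ![1, β, γ]).mulVec ![ev c, 0, 0]) = _
    rw [mulVec_diag_single, mulVec_diag_single]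
    have hv : (![ev b, 0, 0] - ![ev c, 0, 0] : Fin 3 → ℝ) = ![ev b - ev c, 0, 0] := by
      funext i; fin_cases i <;> simp
    rw [hv, norm3_single]
    cases b <;> cases c <;> simp [ev] <;> norm_num
  -- adjacency in addLeaves
  have adj_ll : ∀ u v : V, (addLeaves G K).Adj (Sum.inl u) (Sum.inl v) ↔ G.Adj u v := by
    intro u v
    constructor
    · rintro ⟨-, h | h⟩
      · exact h
      · exact h.symm
    · intro h
      exact ⟨by simpa using h.ne, Or.inl h⟩
  have adj_lr : ∀ (u : V) (p : V × Fin K),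
      (addLeaves G K).Adj (Sum.inl u) (Sum.inr p) ↔ u = p.1 := by
    rintro u ⟨v, i⟩
    constructor
    · rintro ⟨-, h | h⟩
      · exact h
      · exact h.elim
    · intro h; exact ⟨by simp, Or.inl h⟩
  have adj_rl : ∀ (p : V × Fin K) (u : V),
      (addLeaves G K).Adj (Sum.inr p) (Sum.inl u) ↔ u = p.1 := by
    rintro ⟨v, i⟩ u
    constructor
    · rintro ⟨-, h | h⟩
      · exact h.elim
      · exact h
    · intro h; exact ⟨by simp, Or.inr h⟩
  have adj_rr : ∀ p q : V × Fin K, ¬ (addLeaves G K).Adj (Sum.inr p) (Sum.inr q) := by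
    rintro ⟨v, i⟩ ⟨w, j⟩ ⟨-, h | h⟩ <;> exact h
  -- the candidate value
  set c₀ : ℝ := (1 / 4) * ∑ a, ∑ b,
    if (addLeaves G K).Adj a b then
      norm3 ((Matrix.diagonal ![1, β, γ]).mulVec (x a)
        - (Matrix.diagonal ![1, β, γ]).mulVec (x b)) else 0 with hc₀
  have hmem : c₀ ∈ {c : ℝ | ∃ x : V ⊕ V × Fin K → Fin 3 → ℝ, (∀ u, norm3 (x u) = 1) ∧
      c = (1 / 4) * ∑ u, ∑ v, if (addLeaves G K).Adj u v then
        norm3 ((Matrix.diagonal ![1, β, γ]).mulVec (x u)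
          - (Matrix.diagonal ![1, β, γ]).mulVec (x v)) else 0} :=
    ⟨x, he1, hc₀⟩
  have hterm : ∀ a b, (if (addLeaves G K).Adj a b then
      norm3 ((Matrix.diagonal ![1, β, γ]).mulVec (x a)
        - (Matrix.diagonal ![1, β, γ]).mulVec (x b)) else 0)
      = if (addLeaves G K).Adj a b ∧ lab a ≠ lab b then 2 else 0 := by
    intro a b
    by_cases h : (addLeaves G K).Adj a b
    · rw [if_pos h]
      show norm3 ((Matrix.diagonal ![1, β, γ]).mulVec (e (lab a))
        - (Matrix.diagonal ![1, β, γ]).mulVec (e (lab b))) = _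
      rw [hediff]
      by_cases h2 : lab a = lab b <;> simp [h, h2]
    · simp [h]
  -- compute the sum
  have hsum : (∑ a, ∑ b, if (addLeaves G K).Adj a b then
      norm3 ((Matrix.diagonal ![1, β, γ]).mulVec (x a)
        - (Matrix.diagonal ![1, β, γ]).mulVec (x b)) else 0)
      = 2 * (s : ℝ) + 4 * (K : ℝ) * (n : ℝ) := by
    simp only [hterm]
    rw [Fintype.sum_sum_type]
    have hinner : ∀ a : V ⊕ V × Fin K, (∑ b : V ⊕ V × Fin K,
        if (addLeaves G K).Adj a b ∧ lab a ≠ lab b then (2:ℝ) else 0)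
        = (∑ v : V, if (addLeaves G K).Adj a (Sum.inl v) ∧ lab a ≠ lab (Sum.inl v) then (2:ℝ) else 0)
        + ∑ p : V × Fin K, if (addLeaves G K).Adj a (Sum.inr p) ∧ lab a ≠ lab (Sum.inr p) then (2:ℝ) else 0 :=
      fun a => Fintype.sum_sum_type _
    simp only [hinner]
    rw [Finset.sum_add_distrib, Finset.sum_add_distrib]
    have B1 : (∑ u : V, ∑ v : V,
        if (addLeaves G K).Adj (Sum.inl u) (Sum.inl v) ∧ lab (Sum.inl u) ≠ lab (Sum.inl v)
        then (2:ℝ) else 0) = 2 * (s : ℝ) := by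
      have : ∀ u v : V, (if (addLeaves G K).Adj (Sum.inl u) (Sum.inl v) ∧ lab (Sum.inl u) ≠ lab (Sum.inl v)
          then (2:ℝ) else 0) = 2 * (if G.Adj u v ∧ y u ≠ y v then (1:ℝ) else 0) := by
        intro u v
        rw [if_congr (and_congr (adj_ll u v) Iff.rfl) rfl rfl]
        split_ifs <;> norm_num
      simp only [this, ← Finset.mul_sum]
      congr 1
      rw [hs]
      push_cast
      rfl
    have B2 : (∑ u : V, ∑ p : V × Fin K,
        if (addLeaves G K).Adj (Sum.inl u) (Sum.inr p) ∧ lab (Sum.inl u) ≠ lab (Sum.inr p)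
        then (2:ℝ) else 0) = 2 * (K : ℝ) * (n : ℝ) := by
      have : ∀ (u : V) (p : V × Fin K),
          (if (addLeaves G K).Adj (Sum.inl u) (Sum.inr p) ∧ lab (Sum.inl u) ≠ lab (Sum.inr p)
          then (2:ℝ) else 0) = if u = p.1 then 2 else 0 := by
        intro u p
        refine if_congr ?_ rfl rfl
        rw [adj_lr]
        constructor
        · rintro ⟨h, -⟩; exact h
        · intro h
          refine ⟨h, ?_⟩
          show y u ≠ !(y p.1)
          rw [← h]
          cases y u <;> simp
      simp only [this]
      have hp : ∀ u : V, (∑ p : V × Fin K, if u = p.1 then (2:ℝ) else 0) = 2 * K := by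
        intro u
        rw [Fintype.sum_prod_type]
        have h1 : ∀ v : V, (∑ _i : Fin K, if u = v then (2:ℝ) else 0)
            = (K:ℝ) * (if u = v then 2 else 0) := by
          intro v; rw [Finset.sum_const]; simp [Finset.card_univ]
        simp only [h1]
        rw [← Finset.mul_sum, Finset.sum_ite_eq]
        simp [mul_comm]
      simp only [hp]
      rw [Finset.sum_const, Finset.card_univ, ← hn]
      push_cast
      ring
    have B3 : (∑ p : V × Fin K, ∑ u : V,
        if (addLeaves G K).Adj (Sum.inr p) (Sum.inl u) ∧ lab (Sum.inr p) ≠ lab (Sum.inl u)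
        then (2:ℝ) else 0) = 2 * (K : ℝ) * (n : ℝ) := by
      have : ∀ (p : V × Fin K) (u : V),
          (if (addLeaves G K).Adj (Sum.inr p) (Sum.inl u) ∧ lab (Sum.inr p) ≠ lab (Sum.inl u)
          then (2:ℝ) else 0) = if u = p.1 then 2 else 0 := by
        intro p u
        obtain ⟨v, i⟩ := p
        refine if_congr ?_ rfl rfl
        rw [adj_rl]
        constructor
        · rintro ⟨h, -⟩; exact h
        · intro h
          refine ⟨h, ?_⟩
          show (!(y v)) ≠ y u
          have hv : u = v := h
          rw [hv]
          cases y v <;> simp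
      simp only [this]
      rw [Finset.sum_comm]
      have hp : ∀ u : V, (∑ p : V × Fin K, if u = p.1 then (2:ℝ) else 0) = 2 * K := by
        intro u
        rw [Fintype.sum_prod_type]
        have h1 : ∀ v : V, (∑ _i : Fin K, if u = v then (2:ℝ) else 0)
            = (K:ℝ) * (if u = v then 2 else 0) := by
          intro v; rw [Finset.sum_const]; simp [Finset.card_univ]
        simp only [h1]
        rw [← Finset.mul_sum, Finset.sum_ite_eq]
        simp [mul_comm]
      simp only [hp]
      rw [Finset.sum_const, Finset.card_univ, ← hn]
      push_cast
      ring
    have B4 : (∑ p : V × Fin K, ∑ q : V × Fin K,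
        if (addLeaves G K).Adj (Sum.inr p) (Sum.inr q) ∧ lab (Sum.inr p) ≠ lab (Sum.inr q)
        then (2:ℝ) else 0) = 0 := by
      refine Finset.sum_eq_zero fun p _ => Finset.sum_eq_zero fun q _ => ?_
      simp [adj_rr p q]
    rw [B1, B2, B3, B4]
    ring
  have hlb : (C : ℝ) + (K : ℝ) * n ≤ c₀ := by
    rw [hc₀, hsum]
    have : (2 * (C : ℝ)) ≤ (s : ℝ) := by exact_mod_cast hsC
    linarith
  have hub := wlmc_bdd β γ (le_of_lt hβ) hβ0 (le_trans hγβ (le_of_lt hβ)) hγ (addLeaves G K)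
  calc (C : ℝ) + (K : ℝ) * n ≤ c₀ := hlb
    _ ≤ wlmc (Matrix.diagonal ![1, β, γ]) (addLeaves G K) := le_csSup hub hmem
end
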